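/- arXiv:0909.4618 — 8 statements merged into one kernel-verified Lean document; each statement's English description precedes it below -/
import Mathlib

section
/- Let R be a commutative ring, t and d_b positive integers with d_b | t, and let T^{(b)}_m(u) ∈ R^× be invertible elements indexed by m ∈ ℤ_{≥0}, u ∈ (1/t)ℤ, with T^{(b)}_0(u) = 1. Define S^{(b)}_m(u) = ∏_{k=1}^{d_b} T^{(b)}_{1+⌊(m−k)/d_b⌋}(u + (2k − 1 − m + ⌊(m−k)/d_b⌋·d_b)/t) for m ≥ 1, and S^{(b)}_0(u) = 1. Then for m ≥ 1, S^{(b)}_m(u − 1/t) · S^{(b)}_m(u + 1/t) / (S^{(b)}_{m−1}(u) · S^{(b)}_{m+1}(u)) equals T^{(b)}_{m/d_b}(u − d_b/t) · T^{(b)}_{m/d_b}(u + d_b/t) / (T^{(b)}_{m/d_b − 1}(u) · T^{(b)}_{m/d_b + 1}(u)) if d_b divides m, and equals 1 otherwise. -/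
/-- Identity (5.2): for invertible elements `T m u` with `T 0 u = 1` and
`S m u = ∏_{k=1}^{d} T (1+⌊(m−k)/d⌋) (u + (2k−1−m+⌊(m−k)/d⌋·d))`
(indices `u ∈ (1/t)ℤ` scaled so one step is `1/t`, and `d = d_b` divides `t`),
the combination `S_m(u−1/t)S_m(u+1/t)/(S_{m−1}(u)S_{m+1}(u))` equals the analogous
combination of `T_{m/d}` if `d ∣ m`, and equals `1` otherwise. -/
theorem S_identity {R : Type*} [CommRing R] (t d : ℤ) (ht : 0 < t) (hd : 0 < d)
    (hdt : d ∣ t) (T : ℤ → ℤ → Rˣ) (hT0 : ∀ u : ℤ, T 0 u = 1)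
    (S : ℤ → ℤ → Rˣ)
    (hS : ∀ m u : ℤ, S m u =
      ∏ k ∈ Finset.Icc (1 : ℤ) d,
        T (1 + Int.fdiv (m - k) d) (u + (2 * k - 1 - m + Int.fdiv (m - k) d * d)))
    (m u : ℤ) (hm : 1 ≤ m) :
    S m (u - 1) * S m (u + 1) / (S (m - 1) u * S (m + 1) u) =
      if d ∣ m then
        T (m / d) (u - d) * T (m / d) (u + d) / (T (m / d - 1) u * T (m / d + 1) u)
      else 1 := by
  have hd0 : (0:ℤ) ≤ d := hd.le
  have hdne : d ≠ 0 := hd.ne'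
  simp only [Int.fdiv_eq_ediv_of_nonneg _ hd0] at hS
  set g : ℤ → Rˣ := fun k => T (1 + (m - k) / d) (u + 2*k - 2 - m + ((m - k)/d) * d)
    with hg
  set h : ℤ → Rˣ := fun k => T (1 + (m - k) / d) (u + 2*k - m + ((m - k)/d) * d)
    with hh
  have hA : S m (u-1) = ∏ k ∈ Finset.Icc (1:ℤ) d, g k := by
    rw [hS]
    refine Finset.prod_congr rfl fun k _ => ?_
    simp only [hg]; congr 1; ring
  have hC : S m (u+1) = ∏ k ∈ Finset.Icc (1:ℤ) d, h k := by
    rw [hS]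
    refine Finset.prod_congr rfl fun k _ => ?_
    simp only [hh]; congr 1; ring
  have hB : S (m-1) u = ∏ k ∈ Finset.Icc (2:ℤ) (d+1), g k := by
    rw [hS, show Finset.Icc (2:ℤ) (d+1) = Finset.map (addRightEmbedding 1) (Finset.Icc 1 d)
      from (Finset.map_add_right_Icc 1 d 1).symm ▸ rfl, Finset.prod_map]
    refine Finset.prod_congr rfl fun k _ => ?_
    simp only [hg, addRightEmbedding, Function.Embedding.coeFn_mk]
    rw [show m - 1 - k = m - (k + 1) by ring]
    congr 1; ring
  have hD : S (m+1) u = ∏ k ∈ Finset.Icc (0:ℤ) (d-1), h k := by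
    rw [hS, show Finset.Icc (1:ℤ) d = Finset.map (addRightEmbedding 1) (Finset.Icc 0 (d-1))
      by rw [Finset.map_add_right_Icc]; norm_num, Finset.prod_map]
    refine Finset.prod_congr rfl fun k _ => ?_
    simp only [hh, addRightEmbedding, Function.Embedding.coeFn_mk]
    rw [show m + 1 - (k + 1) = m - k by ring]
    congr 1; ring
  -- splitting off endpoints
  have E1 : (∏ k ∈ Finset.Icc (1:ℤ) d, g k) * g (d+1)
      = g 1 * ∏ k ∈ Finset.Icc (2:ℤ) (d+1), g k := by
    have i1 : Finset.Icc (1:ℤ) (d+1) = insert (d+1) (Finset.Icc 1 d) := by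
      ext k; simp only [Finset.mem_Icc, Finset.mem_insert]; omega
    have i2 : Finset.Icc (1:ℤ) (d+1) = insert 1 (Finset.Icc 2 (d+1)) := by
      ext k; simp only [Finset.mem_Icc, Finset.mem_insert]; omega
    rw [mul_comm, ← Finset.prod_insert (by simp), ← i1, i2,
      Finset.prod_insert (by simp)]
  have E2 : h 0 * (∏ k ∈ Finset.Icc (1:ℤ) d, h k)
      = (∏ k ∈ Finset.Icc (0:ℤ) (d-1), h k) * h d := by
    have i1 : Finset.Icc (0:ℤ) d = insert 0 (Finset.Icc 1 d) := by
      ext k; simp only [Finset.mem_Icc, Finset.mem_insert]; omega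
    have i2 : Finset.Icc (0:ℤ) d = insert d (Finset.Icc 0 (d-1)) := by
      ext k; simp only [Finset.mem_Icc, Finset.mem_insert]; omega
    rw [← Finset.prod_insert (by simp), ← i1, i2,
      Finset.prod_insert (by simp), mul_comm]
  have key : (S m (u-1) * S m (u+1)) * (g (d+1) * h 0)
      = (S (m-1) u * S (m+1) u) * (g 1 * h d) := by
    rw [hA, hB, hC, hD]
    calc (∏ k ∈ Finset.Icc (1:ℤ) d, g k) * (∏ k ∈ Finset.Icc (1:ℤ) d, h k)
          * (g (d+1) * h 0)
        = ((∏ k ∈ Finset.Icc (1:ℤ) d, g k) * g (d+1))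
          * (h 0 * (∏ k ∈ Finset.Icc (1:ℤ) d, h k)) := by ac_rfl
      _ = (g 1 * ∏ k ∈ Finset.Icc (2:ℤ) (d+1), g k)
          * ((∏ k ∈ Finset.Icc (0:ℤ) (d-1), h k) * h d) := by rw [E1, E2]
      _ = (∏ k ∈ Finset.Icc (2:ℤ) (d+1), g k) * (∏ k ∈ Finset.Icc (0:ℤ) (d-1), h k)
          * (g 1 * h d) := by ac_rfl
  have main : S m (u - 1) * S m (u + 1) / (S (m - 1) u * S (m + 1) u)
      = (g 1 * h d) / (g (d+1) * h 0) := by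
    rw [div_eq_div_iff_mul_eq_mul, key, mul_comm]
  rw [main]
  -- arithmetic on the division indices
  have hmd : (m - d) / d = m / d - 1 := by
    rw [show m - d = m + (-1) * d by ring, Int.add_mul_ediv_right _ _ hdne]; ring
  have hmd1 : (m - d - 1) / d = (m - 1) / d - 1 := by
    rw [show m - d - 1 = (m - 1) + (-1) * d by ring, Int.add_mul_ediv_right _ _ hdne]
    ring
  by_cases hdm : d ∣ m
  · rw [if_pos hdm]
    have hq : m / d * d = m := Int.ediv_mul_cancel hdm
    have ha : (m - 1) / d = m / d - 1 := by
      rw [show m - 1 = (d - 1) + (m / d - 1) * d by rw [sub_mul, one_mul, hq]; ring,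
        Int.add_mul_ediv_right _ _ hdne, Int.ediv_eq_zero_of_lt (by omega) (by omega)]
      ring
    have eg1 : g 1 = T (m / d) (u - d) := by
      simp only [hg, ha]; congr 1 <;> [omega; skip]
      rw [sub_mul, one_mul, hq]; ring
    have ehd : h d = T (m / d) (u + d) := by
      simp only [hh, hmd]; congr 1 <;> [omega; skip]
      rw [sub_mul, one_mul, hq]; ring
    have egd1 : g (d+1) = T (m / d - 1) u := by
      simp only [hg, show m - (d+1) = m - d - 1 by ring, hmd1, ha]
      congr 1 <;> [omega; skip]
      rw [sub_mul, sub_mul, one_mul, hq]; ring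
    have eh0 : h 0 = T (m / d + 1) u := by
      simp only [hh, sub_zero]; congr 1 <;> [omega; skip]
      rw [hq]; ring
    rw [eg1, ehd, egd1, eh0]
  · rw [if_neg hdm]
    have ha : (m - 1) / d = m / d := by
      have hr0 : 0 ≤ m % d := Int.emod_nonneg m hdne
      have hrd : m % d < d := Int.emod_lt_of_pos m hd
      have hrne : m % d ≠ 0 := fun h0 => hdm (Int.dvd_of_emod_eq_zero h0)
      rw [show m - 1 = (m % d - 1) + (m / d) * d by
          linarith [Int.mul_ediv_add_emod m d],
        Int.add_mul_ediv_right _ _ hdne,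
        Int.ediv_eq_zero_of_lt (by omega) (by omega), zero_add]
    have e1 : g 1 = h 0 := by
      simp only [hg, hh, sub_zero, ha]; congr 1; ring
    have e2 : h d = g (d + 1) := by
      simp only [hg, hh, show m - (d+1) = m - d - 1 by ring, hmd1, hmd, ha]
      congr 1; ring
    rw [e1, e2, mul_comm, div_self']
end

section
/- Let B be a skew-symmetrizable integer matrix indexed by a finite set I with a decomposition I = I_+ ⊔ I_− such that B_{ij} ≠ 0 implies (i,j) ∈ I_+ × I_− or (i,j) ∈ I_− × I_+ (condition (B1)). Let μ_+ = ∏_{i∈I_+} μ_i and μ_− = ∏_{i∈I_−} μ_i (these composed mutations are independent of the order by (B1)). Then μ_+(B) = μ_−(B) = −B if and only if for every ε ∈ {+,−} and all i, j ∈ I_ε, we have ∑_{k: B_{ik}>0, B_{kj}>0} B_{ik}B_{kj} = ∑_{k: B_{ik}<0, B_{kj}<0} B_{ik}B_{kj}. -/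
/-!
Mutating at `k` changes an entry `B i j` with `i, j ≠ k` by `(|B_ik| B_kj + B_ik |B_kj|) / 2`,
which is `B_ik B_kj`, `−B_ik B_kj` or `0` according as both factors are positive, both are
negative, or neither. For `k ∈ I_+` it vanishes unless `i, j ∈ I_−`; as `B` vanishes on
`I_+ × I_+`, mutating at `k` also leaves the rows and columns of the other indices of `I_+`
unchanged, so along `μ_+` the corrections just add up. Hence `μ_+(B)` is `B` with the rows and
columns in `I_+` negated, which is `−B` by (B1), plus, on `I_− × I_−`, the difference of the two
sums of the condition.
-/

/-- Matrix mutation `μ_k(B)` of an integer matrix. -/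
def matMut {I : Type*} [DecidableEq I] (B : I → I → ℤ) (k : I) : I → I → ℤ :=
  fun i j =>
    if i = k ∨ j = k then -B i j
    else B i j + (|B i k| * B k j + B i k * |B k j|) / 2

open Finset

lemma Bool.eq_of_ne_of_ne {x y b : Bool} (hx : x ≠ b) (hy : y ≠ b) : x = y :=
  (Bool.eq_not_iff.mpr hx).trans (Bool.eq_not_iff.mpr hy).symm

def mutCorrection (a b : ℤ) : ℤ := (|a| * b + a * |b|) / 2

@[simp]
lemma mutCorrection_zero_left (b : ℤ) : mutCorrection 0 b = 0 := by simp [mutCorrection]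

@[simp]
lemma mutCorrection_zero_right (a : ℤ) : mutCorrection a 0 = 0 := by simp [mutCorrection]

lemma mutCorrection_eq (a b : ℤ) :
    mutCorrection a b =
      (if 0 < a ∧ 0 < b then a * b else 0) - (if a < 0 ∧ b < 0 then a * b else 0) := by
  refine Int.ediv_eq_of_eq_mul_left two_ne_zero ?_
  rcases lt_trichotomy a 0 with ha | rfl | ha <;> rcases lt_trichotomy b 0 with hb | rfl | hb <;>
    simp [*, abs_of_neg, abs_of_pos, lt_asymm] <;> ring

lemma sum_mutCorrection {ι : Type*} (s : Finset ι) (f g : ι → ℤ) :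
    ∑ k ∈ s, mutCorrection (f k) (g k) =
      (∑ k ∈ s with 0 < f k ∧ 0 < g k, f k * g k) - ∑ k ∈ s with f k < 0 ∧ g k < 0, f k * g k := by
  simp only [mutCorrection_eq, sum_sub_distrib, sum_filter]

section Mutation

variable {I : Type*} [DecidableEq I] {B : I → I → ℤ} {i j k : I}

lemma matMut_apply_left : matMut B i i j = -B i j := if_pos (Or.inl rfl)

lemma matMut_apply_right : matMut B j i j = -B i j := if_pos (Or.inr rfl)

lemma matMut_apply_of_ne (hi : i ≠ k) (hj : j ≠ k) :
    matMut B k i j = B i j + mutCorrection (B i k) (B k j) :=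
  if_neg (not_or.mpr ⟨hi, hj⟩)

def flipSign (l : List I) (i : I) : ℤ := if i ∈ l then -1 else 1

lemma flipSign_cons_of_ne {l : List I} (h : i ≠ k) : flipSign (k :: l) i = flipSign l i := by
  simp [flipSign, h]

lemma flipSign_cons_self {l : List I} : flipSign (k :: l) k = -1 := by
  simp [flipSign]

lemma flipSign_of_notMem {l : List I} (h : i ∉ l) : flipSign l i = 1 := if_neg h

variable {S : Set I}

section Vanishing

variable (hS : ∀ i ∈ S, ∀ j ∈ S, B i j = 0)
include hS

lemma matMut_eq_zero_of_mem (hk : k ∈ S) : ∀ i ∈ S, ∀ j ∈ S, matMut B k i j = 0 := by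
  intro i hi j hj
  by_cases hik : i = k
  · subst hik; simp [matMut_apply_left, hS i hi j hj]
  by_cases hjk : j = k
  · subst hjk; simp [matMut_apply_right, hS i hi j hj]
  simp [matMut_apply_of_ne hik hjk, hS i hi j hj, hS i hi k hk]

lemma matMut_apply_of_right_mem {k' : I} (hk : k ∈ S) (hk' : k' ∈ S) (h : k' ≠ k) :
    matMut B k i k' = B i k' := by
  by_cases hik : i = k
  · subst hik; simp [matMut_apply_left, hS i hk k' hk']
  · simp [matMut_apply_of_ne hik h, hS k hk k' hk']

lemma matMut_apply_of_left_mem {k' : I} (hk : k ∈ S) (hk' : k' ∈ S) (h : k' ≠ k) :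
    matMut B k k' j = B k' j := by
  by_cases hjk : j = k
  · subst hjk; simp [matMut_apply_right, hS k' hk' j hk]
  · simp [matMut_apply_of_ne h hjk, hS k' hk' k hk]

lemma flipSign_mul_matMut_apply {l : List I} (hk : k ∈ S) (hkl : k ∉ l) (hl : ∀ k' ∈ l, k' ∈ S) :
    flipSign l i * flipSign l j * matMut B k i j =
      flipSign (k :: l) i * flipSign (k :: l) j * B i j + mutCorrection (B i k) (B k j) := by
  have hkk : B k k = 0 := hS k hk k hk
  by_cases hik : i = k <;> by_cases hjk : j = k
  · subst hik hjk; simp [matMut_apply_left, hkk]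
  · subst hik
    rw [matMut_apply_left, flipSign_cons_of_ne hjk, flipSign_of_notMem hkl, flipSign_cons_self,
      hkk, mutCorrection_zero_left]
    ring
  · subst hjk
    rw [matMut_apply_right, flipSign_cons_of_ne hik, flipSign_of_notMem hkl, flipSign_cons_self,
      hkk, mutCorrection_zero_right]
    ring
  · -- a nonzero correction forces `i, j ∉ S`, hence `i, j ∉ l`
    have hcorr : flipSign l i * flipSign l j * mutCorrection (B i k) (B k j) =
        mutCorrection (B i k) (B k j) := by
      by_cases hi : i ∈ S
      · simp [hS i hi k hk]
      by_cases hj : j ∈ S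
      · simp [hS k hk j hj]
      rw [flipSign_of_notMem (fun h => hi (hl i h)), flipSign_of_notMem (fun h => hj (hl j h))]
      ring
    rw [matMut_apply_of_ne hik hjk, flipSign_cons_of_ne hik, flipSign_cons_of_ne hjk, mul_add, hcorr]

end Vanishing

lemma foldl_matMut_apply (l : List I) (hn : l.Nodup) (hl : ∀ k ∈ l, k ∈ S)
    (hS : ∀ i ∈ S, ∀ j ∈ S, B i j = 0) (i j : I) :
    l.foldl matMut B i j =
      flipSign l i * flipSign l j * B i j + (l.map fun k => mutCorrection (B i k) (B k j)).sum := by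
  induction l generalizing B with
  | nil => simp [flipSign]
  | cons k t ih =>
    obtain ⟨hkt, htn⟩ := List.nodup_cons.mp hn
    have hk : k ∈ S := hl k List.mem_cons_self
    have ht : ∀ k' ∈ t, k' ∈ S := fun k' h => hl k' (List.mem_cons_of_mem k h)
    have hrest : (t.map fun k' => mutCorrection (matMut B k i k') (matMut B k k' j)) =
        t.map fun k' => mutCorrection (B i k') (B k' j) := by
      refine List.map_congr_left fun k' hk' => ?_
      have hne : k' ≠ k := fun h => hkt (h ▸ hk')
      rw [matMut_apply_of_right_mem hS hk (ht k' hk') hne,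
        matMut_apply_of_left_mem hS hk (ht k' hk') hne]
    rw [List.foldl_cons, ih htn ht (matMut_eq_zero_of_mem hS hk), hrest,
      flipSign_mul_matMut_apply hS hk hkt ht, List.map_cons, List.sum_cons, add_assoc]

end Mutation

section Bipartite

variable {I : Type*} {B : I → I → ℤ} {eps : I → Bool}
  (hB1 : ∀ i j, B i j ≠ 0 → eps i ≠ eps j)
include hB1

lemma eq_zero_of_eps_eq {i j : I} (h : eps i = eps j) : B i j = 0 :=
  Function.mtr (hB1 i j) h

lemma sum_mutCorrection_eq_zero_of_eps_ne [Fintype I] {i j : I} (hij : eps i ≠ eps j) :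
    ∑ k, mutCorrection (B i k) (B k j) = 0 := by
  refine sum_eq_zero fun k _ => ?_
  by_cases hki : eps k = eps i
  · simp [eq_zero_of_eps_eq hB1 hki.symm]
  · simp [eq_zero_of_eps_eq hB1 (Bool.eq_of_ne_of_ne hki (Ne.symm hij))]

variable [DecidableEq I] {b : Bool} {l : List I} (hmem : ∀ i, i ∈ l ↔ eps i = b)
include hmem

lemma flipSign_mul_flipSign_mul_apply (i j : I) :
    flipSign l i * flipSign l j * B i j = -B i j := by
  by_cases h : B i j = 0
  · simp [h]
  have hij := hB1 i j h
  simp only [flipSign, hmem]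
  revert hij
  cases eps i <;> cases eps j <;> cases b <;> simp

lemma sum_map_mutCorrection [Fintype I] (hn : l.Nodup) (i j : I) :
    (l.map fun k => mutCorrection (B i k) (B k j)).sum =
      if eps i = b then 0 else ∑ k, mutCorrection (B i k) (B k j) := by
  rw [← List.sum_toFinset _ hn]
  split_ifs with hi
  · refine sum_eq_zero fun k hk => ?_
    rw [List.mem_toFinset, hmem] at hk
    simp [eq_zero_of_eps_eq hB1 (hi.trans hk.symm)]
  · have hl : l.toFinset = univ.filter (eps · = b) := by ext k; simp [hmem]
    rw [hl]
    refine sum_filter_of_ne fun k _ hk => ?_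
    by_contra hkb
    exact hk (by simp [eq_zero_of_eps_eq hB1 (Bool.eq_of_ne_of_ne hi hkb)])

lemma foldl_matMut_eq_neg_iff [Fintype I] (hn : l.Nodup) :
    l.foldl matMut B = -B ↔ ∀ i j, eps i ≠ b → ∑ k, mutCorrection (B i k) (B k j) = 0 := by
  have hS : ∀ i ∈ {k | eps k = b}, ∀ j ∈ {k | eps k = b}, B i j = 0 :=
    fun i hi j hj => eq_zero_of_eps_eq hB1 (hi.trans hj.symm)
  have entry (i j : I) : l.foldl matMut B i j =
      -B i j + if eps i = b then 0 else ∑ k, mutCorrection (B i k) (B k j) := by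
    rw [foldl_matMut_apply l hn (fun k hk => (hmem k).mp hk) hS,
      flipSign_mul_flipSign_mul_apply hB1 hmem, sum_map_mutCorrection hB1 hmem hn]
  simp only [funext_iff, Pi.neg_apply, entry, add_eq_left, ite_eq_left_iff]

end Bipartite

theorem B2_iff_sum_condition_general {I : Type*} [Fintype I] [DecidableEq I]
    (B : I → I → ℤ) (eps : I → Bool)
    (hB1 : ∀ i j, B i j ≠ 0 → eps i ≠ eps j)
    (lp lm : List I) (hpn : lp.Nodup) (hmn : lm.Nodup)
    (hpmem : ∀ i, i ∈ lp ↔ eps i = true)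
    (hmmem : ∀ i, i ∈ lm ↔ eps i = false) :
    (lp.foldl (fun M k => matMut M k) B = -B ∧
      lm.foldl (fun M k => matMut M k) B = -B) ↔
      ∀ i j, eps i = eps j →
        (∑ k ∈ Finset.univ.filter (fun k => 0 < B i k ∧ 0 < B k j), B i k * B k j) =
          ∑ k ∈ Finset.univ.filter (fun k => B i k < 0 ∧ B k j < 0), B i k * B k j := by
  rw [foldl_matMut_eq_neg_iff hB1 hpmem hpn, foldl_matMut_eq_neg_iff hB1 hmmem hmn]
  constructor
  · rintro ⟨hp, hm⟩ i j -
    rw [← sub_eq_zero, ← sum_mutCorrection]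
    cases hi : eps i
    · exact hp i j (by simp [hi])
    · exact hm i j (by simp [hi])
  · intro h
    have hT (i j : I) : ∑ k, mutCorrection (B i k) (B k j) = 0 := by
      by_cases hij : eps i = eps j
      · rw [sum_mutCorrection, h i j hij, sub_self]
      · exact sum_mutCorrection_eq_zero_of_eps_ne hB1 hij
    exact ⟨fun i j _ => hT i j, fun i j _ => hT i j⟩

/-- Under condition (B1) (nonzero entries only between the parts `I_+` and `I_−`,
the parts being given by `eps`), the condition (B2), namely
`μ_+(B) = μ_−(B) = −B` for the composed mutations over `I_+` and `I_−`
(here realized by folding over lists `lp`, `lm` enumerating the two parts),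
is equivalent to: for all `i, j` in the same part,
`∑_{k : B_{ik}>0, B_{kj}>0} B_{ik}B_{kj} = ∑_{k : B_{ik}<0, B_{kj}<0} B_{ik}B_{kj}`. -/
theorem B2_iff_sum_condition {I : Type*} [Fintype I] [DecidableEq I]
    (B : I → I → ℤ) (eps : I → Bool) (d : I → ℤ) (hd : ∀ i, 0 < d i)
    (hskew : ∀ i j, d i * B i j = -(d j * B j i))
    (hB1 : ∀ i j, B i j ≠ 0 → eps i ≠ eps j)
    (lp lm : List I) (hpn : lp.Nodup) (hmn : lm.Nodup)
    (hpmem : ∀ i, i ∈ lp ↔ eps i = true)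
    (hmmem : ∀ i, i ∈ lm ↔ eps i = false) :
    (lp.foldl (fun M k => matMut M k) B = -B ∧
      lm.foldl (fun M k => matMut M k) B = -B) ↔
      ∀ i j, eps i = eps j →
        (∑ k ∈ Finset.univ.filter (fun k => 0 < B i k ∧ 0 < B k j), B i k * B k j) =
          ∑ k ∈ Finset.univ.filter (fun k => B i k < 0 ∧ B k j < 0), B i k * B k j :=
  B2_iff_sum_condition_general B eps hB1 lp lm hpn hmn hpmem hmmem
end

section
/- Let C be a bipartite symmetrizable generalized Cartan matrix with I = I_+ ⊔ I_− (i.e., C_{ij} < 0 only when i and j lie in different parts). Define the matrix B = B(C) by B_{ij} = −C_{ij} if (i,j) ∈ I_+ × I_−, B_{ij} = C_{ij} if (i,j) ∈ I_− × I_+, and B_{ij} = 0 otherwise. Then B is skew-symmetrizable (with the same symmetrizer D as C) and satisfies conditions (B1) and (B2): B_{ij} ≠ 0 only for pairs in (I_+ × I_−) ∪ (I_− × I_+), and μ_+(B) = μ_−(B) = −B. -/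
section Mutation

variable {I : Type*} [DecidableEq I]

theorem abs_mul_add_mul_abs_eq_zero {α : Type*} [CommRing α] [LinearOrder α]
    [IsStrictOrderedRing α] {x y : α} (h : x * y ≤ 0) : |x| * y + x * |y| = 0 := by
  rcases abs_cases x with ⟨hx, hx'⟩ | ⟨hx, hx'⟩ <;>
    rcases abs_cases y with ⟨hy, hy'⟩ | ⟨hy, hy'⟩ <;> nlinarith

def negRowsCols (l : List I) (M : I → I → ℤ) : I → I → ℤ :=
  fun i j => if i ∈ l ∨ j ∈ l then -M i j else M i j

/-- For skew-symmetrizable `M` this says that `k` is a source or a sink of the quiver of `M`. -/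
def IsSourceOrSink (M : I → I → ℤ) (k : I) : Prop :=
  ∀ i j, M i k * M k j ≤ 0

def IsBipartite (eps : I → Bool) (M : I → I → ℤ) : Prop :=
  ∀ i j, eps i = eps j → M i j = 0

theorem matMut_eq_negRowsCols {M : I → I → ℤ} {k : I} (h : IsSourceOrSink M k) :
    matMut M k = negRowsCols [k] M := by
  funext i j
  simp only [matMut, negRowsCols, List.mem_singleton, abs_mul_add_mul_abs_eq_zero (h i j),
    Int.zero_ediv, add_zero]

variable {eps : I → Bool} {M : I → I → ℤ}

theorem isBipartite_negRowsCols (hM : IsBipartite eps M) (l : List I) :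
    IsBipartite eps (negRowsCols l M) := by
  intro i j h
  simp [negRowsCols, hM i j h]

theorem IsBipartite.isSourceOrSink_negRowsCols (hM : IsBipartite eps M) {k k' : I}
    (hk : eps k = eps k') (h : IsSourceOrSink M k') : IsSourceOrSink (negRowsCols [k] M) k' := by
  intro i j
  by_cases hkk' : k = k'
  · subst hkk'
    simpa [negRowsCols] using h i j
  · have hkk'0 : M k k' = 0 := hM k k' hk
    have hk'k0 : M k' k = 0 := hM k' k hk.symm
    by_cases hi : i = k <;> by_cases hj : j = k <;>
      simp [negRowsCols, hi, hj, Ne.symm hkk', hkk'0, hk'k0, h i j]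

theorem IsBipartite.negRowsCols_negRowsCols_singleton (hM : IsBipartite eps M) {b : Bool}
    {k : I} {t : List I} (hkt : k ∉ t) (hb : ∀ i ∈ k :: t, eps i = b) :
    negRowsCols t (negRowsCols [k] M) = negRowsCols (k :: t) M := by
  funext i j
  by_cases hij : M i j = 0
  · simp [negRowsCols, hij]
  have hone : ¬ (i ∈ k :: t ∧ j ∈ k :: t) := fun ⟨hi, hj⟩ =>
    hij (hM i j ((hb i hi).trans (hb j hj).symm))
  simp only [negRowsCols, List.mem_cons] at hone ⊢
  by_cases hi : i = k <;> by_cases hj : j = k <;> subst_vars <;> simp_all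

theorem IsBipartite.foldl_matMut_eq_negRowsCols (hM : IsBipartite eps M) {b : Bool}
    (hsrc : ∀ k, eps k = b → IsSourceOrSink M k) {l : List I} (hl : l.Nodup)
    (hb : ∀ i ∈ l, eps i = b) : l.foldl matMut M = negRowsCols l M := by
  induction l generalizing M with
  | nil => funext i j; simp [negRowsCols]
  | cons k t ih =>
    have hk : eps k = b := hb k List.mem_cons_self
    rw [List.foldl_cons, matMut_eq_negRowsCols (hsrc k hk),
      ih (isBipartite_negRowsCols hM [k])
        (fun k' hk' => hM.isSourceOrSink_negRowsCols (hk.trans hk'.symm) (hsrc k' hk'))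
        (List.nodup_cons.mp hl).2 (fun i hi => hb i (List.mem_cons_of_mem k hi)),
      hM.negRowsCols_negRowsCols_singleton (List.nodup_cons.mp hl).1 hb]

theorem IsBipartite.negRowsCols_eq_neg (hM : IsBipartite eps M) {b : Bool} {l : List I}
    (hl : ∀ i, i ∈ l ↔ eps i = b) : negRowsCols l M = -M := by
  funext i j
  by_cases hij : eps i = eps j
  · simp [negRowsCols, hM i j hij]
  · have : i ∈ l ∨ j ∈ l := by
      rw [hl, hl]
      revert hij
      cases eps i <;> cases eps j <;> cases b <;> simp
    simp [negRowsCols, this]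

theorem IsBipartite.foldl_matMut_eq_neg (hM : IsBipartite eps M) {b : Bool}
    (hsrc : ∀ k, eps k = b → IsSourceOrSink M k) {l : List I} (hnd : l.Nodup)
    (hl : ∀ i, i ∈ l ↔ eps i = b) : l.foldl matMut M = -M := by
  rw [hM.foldl_matMut_eq_negRowsCols hsrc hnd (fun i hi => (hl i).mp hi),
    hM.negRowsCols_eq_neg hl]

end Mutation

section CartanToExchange

variable {I : Type*} (eps : I → Bool) (C : I → I → ℤ)

def cartanToExchange : I → I → ℤ :=
  fun i j =>
    if eps i = true ∧ eps j = false then -C i j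
    else if eps i = false ∧ eps j = true then C i j
    else 0

theorem isBipartite_cartanToExchange : IsBipartite eps (cartanToExchange eps C) := by
  intro i j h
  simp [cartanToExchange, h]

variable {eps C}

theorem isSourceOrSink_cartanToExchange (hoff : ∀ i j, i ≠ j → C i j ≤ 0)
    (k : I) : IsSourceOrSink (cartanToExchange eps C) k := by
  intro i j
  have hB := isBipartite_cartanToExchange eps C
  by_cases hik : eps i = eps k
  · simp [hB i k hik]
  by_cases hkj : eps k = eps j
  · simp [hB k j hkj]
  have hCik := hoff i k (fun h => hik (congrArg eps h))
  have hCkj := hoff k j (fun h => hkj (congrArg eps h))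
  cases hi : eps i <;> cases hk : eps k <;> cases hj : eps j <;>
    simp_all [cartanToExchange] <;> nlinarith

theorem cartanToExchange_skew {d : I → ℤ} (hsym : ∀ i j, d i * C i j = d j * C j i)
    (i j : I) :
    d i * cartanToExchange eps C i j = -(d j * cartanToExchange eps C j i) := by
  cases hi : eps i <;> cases hj : eps j <;> simp [cartanToExchange, hi, hj, hsym i j]

end CartanToExchange

theorem bipartite_Cartan_gives_B_general {I : Type*} [DecidableEq I]
    (C : I → I → ℤ) (d : I → ℤ)
    (hoff : ∀ i j, i ≠ j → C i j ≤ 0)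
    (hsym : ∀ i j, d i * C i j = d j * C j i)
    (eps : I → Bool)
    (B : I → I → ℤ)
    (hB : ∀ i j, B i j =
      if eps i = true ∧ eps j = false then -C i j
      else if eps i = false ∧ eps j = true then C i j
      else 0) :
    (∀ i j, d i * B i j = -(d j * B j i)) ∧
    (∀ i j, B i j ≠ 0 → eps i ≠ eps j) ∧
    (∀ l : List I, l.Nodup → (∀ i, i ∈ l ↔ eps i = true) →
      l.foldl (fun M k => matMut M k) B = -B) ∧
    (∀ l : List I, l.Nodup → (∀ i, i ∈ l ↔ eps i = false) →
      l.foldl (fun M k => matMut M k) B = -B) := by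
  obtain rfl : B = cartanToExchange eps C := funext fun i => funext (hB i)
  have hbip := isBipartite_cartanToExchange eps C
  have hsrc := isSourceOrSink_cartanToExchange (eps := eps) hoff
  exact ⟨cartanToExchange_skew hsym, fun i j h he => h (hbip i j he),
    fun _ hnd hl => hbip.foldl_matMut_eq_neg (fun k _ => hsrc k) hnd hl,
    fun _ hnd hl => hbip.foldl_matMut_eq_neg (fun k _ => hsrc k) hnd hl⟩

/-- For a bipartite symmetrizable generalized Cartan matrix `C` with parts given by
`eps`, the matrix `B = B(C)` (with `B_{ij} = −C_{ij}` on `I_+ × I_−`, `C_{ij}` on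
`I_− × I_+`, `0` otherwise) is skew-symmetrizable with the same symmetrizer `D`, and
satisfies (B1) and (B2): `B_{ij} ≠ 0` only for pairs in different parts, and
`μ_+(B) = μ_−(B) = −B` (composed mutations realized as folds over lists enumerating
the parts). -/
theorem bipartite_Cartan_gives_B {I : Type*} [Fintype I] [DecidableEq I]
    (C : I → I → ℤ) (d : I → ℤ) (hd : ∀ i, 0 < d i)
    (hdiag : ∀ i, C i i = 2) (hoff : ∀ i j, i ≠ j → C i j ≤ 0)
    (hzero : ∀ i j, C i j = 0 ↔ C j i = 0)
    (hsym : ∀ i j, d i * C i j = d j * C j i)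
    (eps : I → Bool) (hbip : ∀ i j, C i j < 0 → eps i ≠ eps j)
    (B : I → I → ℤ)
    (hB : ∀ i j, B i j =
      if eps i = true ∧ eps j = false then -C i j
      else if eps i = false ∧ eps j = true then C i j
      else 0) :
    (∀ i j, d i * B i j = -(d j * B j i)) ∧
    (∀ i j, B i j ≠ 0 → eps i ≠ eps j) ∧
    (∀ l : List I, l.Nodup → (∀ i, i ∈ l ↔ eps i = true) →
      l.foldl (fun M k => matMut M k) B = -B) ∧
    (∀ l : List I, l.Nodup → (∀ i, i ∈ l ↔ eps i = false) →
      l.foldl (fun M k => matMut M k) B = -B) :=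
  bipartite_Cartan_gives_B_general C d hoff hsym eps B hB
end

section
/- Let C (indexed by I = I_+ ⊔ I_−) and C' (indexed by I' = I'_+ ⊔ I'_−) be bipartite symmetrizable generalized Cartan matrices. Define the square product B = B(C) □ B(C') on I × I' by: B_{(i,i'),(j,j')} = −C_{ij}δ_{i'j'} if (i,i') has sign pattern (−+) and (j,j') has (++), or (i,i') has (+−) and (j,j') has (−−); B_{(i,i'),(j,j')} = C_{ij}δ_{i'j'} if (i,i') has (++) and (j,j') has (−+), or (−−) and (+−); B_{(i,i'),(j,j')} = −δ_{ij}C'_{i'j'} if (i,i') has (++) and (j,j') has (+−), or (−−) and (−+); B_{(i,i'),(j,j')} = δ_{ij}C'_{i'j'} if (i,i') has (+−) and (j,j') has (++), or (−+) and (−−); and 0 otherwise. Then B is skew-symmetrizable with symmetrizer diag(d_i d'_{i'}) and satisfies conditions (B1) and (B2) with respect to (I×I')_+ = (I_+ × I'_+) ⊔ (I_− × I'_−) and (I×I')_− = (I_+ × I'_−) ⊔ (I_− × I'_+). -/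
lemma sq_Tpp (a b : ℤ) (ha : 0 ≤ a) (hb : 0 ≤ b) : (|a| * b + a * |b|) / 2 = a * b := by
  rw [abs_of_nonneg ha, abs_of_nonneg hb]; omega

lemma sq_Tnn (a b : ℤ) (ha : a ≤ 0) (hb : b ≤ 0) : (|a| * b + a * |b|) / 2 = -(a * b) := by
  rw [abs_of_nonpos ha, abs_of_nonpos hb]; simp only [neg_mul, mul_neg]; omega

lemma sq_Tpn (a b : ℤ) (ha : 0 ≤ a) (hb : b ≤ 0) : (|a| * b + a * |b|) / 2 = 0 := by
  rw [abs_of_nonneg ha, abs_of_nonpos hb]; simp only [neg_mul, mul_neg]; omega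

lemma sq_Tnp (a b : ℤ) (ha : a ≤ 0) (hb : 0 ≤ b) : (|a| * b + a * |b|) / 2 = 0 := by
  rw [abs_of_nonpos ha, abs_of_nonneg hb]; simp only [neg_mul, mul_neg]; omega

lemma sq_bool_ne_ne : ∀ a b c : Bool, ¬ a = b → ¬ a = c → b = c := by decide

lemma sq_fold_inv {J : Type*} [DecidableEq J] (B : J → J → ℤ) (Q : J → Prop) [DecidablePred Q]
    (hQ0 : ∀ p q, (Q p ↔ Q q) → B p q = 0) :
    ∀ l : List J, l.Nodup → (∀ k ∈ l, Q k) → ∀ p q,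
      (l.foldl (fun M k => matMut M k) B) p q =
        if Q p ∧ Q q then 0
        else if Q p then (if p ∈ l then -B p q else B p q)
        else if Q q then (if q ∈ l then -B p q else B p q)
        else B p q + (l.map (fun k => (|B p k| * B k q + B p k * |B k q|) / 2)).sum := by
  intro l
  induction l using List.reverseRecOn with
  | nil =>
    intro _ _ p q
    by_cases hp : Q p <;> by_cases hq : Q q
    · simp [hp, hq, hQ0 p q (by tauto)]
    all_goals simp [hp, hq]
  | append_singleton l k ih =>
    intro hnd hQl p q
    have hndl : l.Nodup := hnd.of_append_left
    have hkl : k ∉ l := by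
      have := hnd
      simp [List.nodup_append] at this
      tauto
    have hQk : Q k := hQl k (by simp)
    have hQl' : ∀ x ∈ l, Q x := fun x hx => hQl x (by simp [hx])
    rw [List.foldl_append]
    simp only [List.foldl_cons, List.foldl_nil]
    set F := l.foldl (fun M k => matMut M k) B with hF
    rw [show (matMut F k) p q =
      (if p = k ∨ q = k then -F p q
       else F p q + (|F p k| * F k q + F p k * |F k q|) / 2) from rfl]
    by_cases hp : Q p <;> by_cases hq : Q q
    · -- Q p, Q q : everything is 0
      have h1 : ∀ a b, Q a → Q b → F a b = 0 := by
        intro a b ha hb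
        rw [ih hndl hQl' a b]; simp [ha, hb]
      rw [if_pos (show Q p ∧ Q q from ⟨hp, hq⟩)]
      split_ifs with h
      · rw [h1 p q hp hq]; ring
      · rw [h1 p q hp hq, h1 p k hp hQk, h1 k q hQk hq]; simp
    · -- Q p, ¬ Q q
      have hqk : q ≠ k := fun h => hq (h ▸ hQk)
      by_cases hpk : p = k
      · subst hpk
        rw [if_pos (Or.inl rfl), ih hndl hQl' p q]
        simp [hp, hq, hkl, List.mem_append]
      · rw [if_neg (by tauto), ih hndl hQl' p q, ih hndl hQl' p k]
        have hpk0 : B p k = 0 := hQ0 p k (by tauto)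
        simp [hp, hq, hQk, hpk0, List.mem_append, hpk]
    · -- ¬ Q p, Q q
      have hpk : p ≠ k := fun h => hp (h ▸ hQk)
      by_cases hqk : q = k
      · subst hqk
        rw [if_pos (Or.inr rfl), ih hndl hQl' p q]
        simp [hp, hq, hkl, List.mem_append]
      · rw [if_neg (by tauto), ih hndl hQl' p q, ih hndl hQl' k q]
        have hkq0 : B k q = 0 := hQ0 k q (by tauto)
        simp [hp, hq, hQk, hkq0, List.mem_append, hqk]
    · -- ¬ Q p, ¬ Q q
      have hpk : p ≠ k := fun h => hp (h ▸ hQk)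
      have hqk : q ≠ k := fun h => hq (h ▸ hQk)
      rw [if_neg (by tauto)]
      have e1 : F p q = B p q
          + (l.map (fun k => (|B p k| * B k q + B p k * |B k q|) / 2)).sum := by
        rw [ih hndl hQl' p q]; simp [hp, hq]
      have e2 : F p k = B p k := by
        rw [ih hndl hQl' p k]; simp [hp, hQk, hkl]
      have e3 : F k q = B k q := by
        rw [ih hndl hQl' k q]; simp [hq, hQk, hkl]
      rw [if_neg (show ¬(Q p ∧ Q q) by tauto), if_neg hp, if_neg hq, e1, e2, e3]
      simp only [List.map_append, List.sum_append, List.map_cons, List.map_nil, List.sum_cons,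
        List.sum_nil]
      ring

lemma sq_fold_neg {J : Type*} [Fintype J] [DecidableEq J] (B : J → J → ℤ) (Q : J → Prop)
    [DecidablePred Q]
    (hQ0 : ∀ p q, (Q p ↔ Q q) → B p q = 0)
    (hT : ∀ p q, ¬ Q p → ¬ Q q →
      (∑ k, (|B p k| * B k q + B p k * |B k q|) / 2) = 0)
    (l : List J) (hnd : l.Nodup) (hmem : ∀ p, p ∈ l ↔ Q p) :
    l.foldl (fun M k => matMut M k) B = -B := by
  funext p q
  rw [sq_fold_inv B Q hQ0 l hnd (fun k hk => (hmem k).1 hk) p q]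
  by_cases hp : Q p <;> by_cases hq : Q q
  · simp only [if_pos (show Q p ∧ Q q from ⟨hp, hq⟩)]
    have : B p q = 0 := hQ0 p q (by tauto)
    simp [this]
  · simp [hp, hq, (hmem p).2 hp]
  · simp [hp, hq, (hmem q).2 hq]
  · rw [if_neg (by tauto), if_neg hp, if_neg hq]
    have hsum : (l.map (fun k => (|B p k| * B k q + B p k * |B k q|) / 2)).sum
        = ∑ k, (|B p k| * B k q + B p k * |B k q|) / 2 := by
      rw [← List.sum_toFinset _ hnd]
      apply Finset.sum_subset
      · intro x _; exact Finset.mem_univ x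
      · intro x _ hx
        have hx' : ¬ Q x := fun h => hx (List.mem_toFinset.2 ((hmem x).2 h))
        have : B p x = 0 := hQ0 p x (by tauto)
        simp [this]
    rw [hsum, hT p q hp hq]
    have : B p q = 0 := hQ0 p q (by tauto)
    simp [this]

/-- The square product `B = B(C) □ B(C')` of two bipartite symmetrizable generalized
Cartan matrices is skew-symmetrizable with symmetrizer `diag(d_i d'_{i'})` and
satisfies (B1) and (B2) with respect to
`(I×I')_+ = (I_+×I'_+) ⊔ (I_−×I'_−)`, `(I×I')_− = (I_+×I'_−) ⊔ (I_−×I'_+)`,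
i.e. with the part of `(i,i')` given by `eps i = eps' i'`.  Here (B2) is the
condition `μ_+(B) = μ_−(B) = −B`, the composed mutations being realized as folds
over lists enumerating the parts. -/
theorem square_product_B {I I' : Type*} [Fintype I] [DecidableEq I]
    [Fintype I'] [DecidableEq I']
    (C : I → I → ℤ) (C' : I' → I' → ℤ) (d : I → ℤ) (d' : I' → ℤ)
    (hd : ∀ i, 0 < d i) (hd' : ∀ i', 0 < d' i')
    (hdiag : ∀ i, C i i = 2) (hdiag' : ∀ i', C' i' i' = 2)
    (hoff : ∀ i j, i ≠ j → C i j ≤ 0) (hoff' : ∀ i' j', i' ≠ j' → C' i' j' ≤ 0)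
    (hzero : ∀ i j, C i j = 0 ↔ C j i = 0)
    (hzero' : ∀ i' j', C' i' j' = 0 ↔ C' j' i' = 0)
    (hsym : ∀ i j, d i * C i j = d j * C j i)
    (hsym' : ∀ i' j', d' i' * C' i' j' = d' j' * C' j' i')
    (eps : I → Bool) (eps' : I' → Bool)
    (hbip : ∀ i j, C i j < 0 → eps i ≠ eps j)
    (hbip' : ∀ i' j', C' i' j' < 0 → eps' i' ≠ eps' j')
    (B : I × I' → I × I' → ℤ)
    (hB : ∀ i i' j j', B (i, i') (j, j') =
      if eps i = false ∧ eps' i' = true ∧ eps j = true ∧ eps' j' = true then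
        (if i' = j' then -C i j else 0)
      else if eps i = true ∧ eps' i' = false ∧ eps j = false ∧ eps' j' = false then
        (if i' = j' then -C i j else 0)
      else if eps i = true ∧ eps' i' = true ∧ eps j = false ∧ eps' j' = true then
        (if i' = j' then C i j else 0)
      else if eps i = false ∧ eps' i' = false ∧ eps j = true ∧ eps' j' = false then
        (if i' = j' then C i j else 0)
      else if eps i = true ∧ eps' i' = true ∧ eps j = true ∧ eps' j' = false then
        (if i = j then -C' i' j' else 0)
      else if eps i = false ∧ eps' i' = false ∧ eps j = false ∧ eps' j' = true then
        (if i = j then -C' i' j' else 0)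
      else if eps i = true ∧ eps' i' = false ∧ eps j = true ∧ eps' j' = true then
        (if i = j then C' i' j' else 0)
      else if eps i = false ∧ eps' i' = true ∧ eps j = false ∧ eps' j' = false then
        (if i = j then C' i' j' else 0)
      else 0) :
    (∀ p q : I × I', (d p.1 * d' p.2) * B p q = -((d q.1 * d' q.2) * B q p)) ∧
    (∀ p q : I × I', B p q ≠ 0 → (eps p.1 = eps' p.2) ≠ (eps q.1 = eps' q.2)) ∧
    (∀ l : List (I × I'), l.Nodup → (∀ p, p ∈ l ↔ eps p.1 = eps' p.2) →
      l.foldl (fun M k => matMut M k) B = -B) ∧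
    (∀ l : List (I × I'), l.Nodup → (∀ p, p ∈ l ↔ ¬(eps p.1 = eps' p.2)) →
      l.foldl (fun M k => matMut M k) B = -B) := by
  -- normal form of B
  have hBf : ∀ i i' j j', B (i, i') (j, j') =
      (if i' = j' ∧ ¬ eps i = eps j then
        (if eps i = eps' i' then C i j else -C i j) else 0)
    + (if i = j ∧ ¬ eps' i' = eps' j' then
        (if eps i = eps' i' then -C' i' j' else C' i' j') else 0) := by
    intro i i' j j'
    rw [hB]; clear hB
    cases h1 : eps i <;> cases h2 : eps' i' <;> cases h3 : eps j <;> cases h4 : eps' j' <;>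
      simp [h1, h2, h3, h4] <;> split_ifs <;> simp_all
  clear hB
  -- (B1) : B vanishes on pairs in the same part
  have hQ0 : ∀ p q : I × I', ((eps p.1 = eps' p.2) ↔ (eps q.1 = eps' q.2)) → B p q = 0 := by
    rintro ⟨i, i'⟩ ⟨j, j'⟩ hiff
    replace hiff : (eps i = eps' i') ↔ (eps j = eps' j') := hiff
    have hcond1 : ¬(i' = j' ∧ ¬ eps i = eps j) := by
      rintro ⟨rfl, hne⟩
      apply hne
      revert hiff
      cases h1 : eps i <;> cases h2 : eps j <;> cases h3 : eps' i' <;> simp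
    have hcond2 : ¬(i = j ∧ ¬ eps' i' = eps' j') := by
      rintro ⟨rfl, hne⟩
      apply hne
      revert hiff
      cases h1 : eps i <;> cases h2 : eps' i' <;> cases h3 : eps' j' <;> simp
    rw [hBf, if_neg hcond1, if_neg hcond2]
    simp
  -- skew-symmetrizability
  have hskew : ∀ p q : I × I', (d p.1 * d' p.2) * B p q = -((d q.1 * d' q.2) * B q p) := by
    rintro ⟨i, i'⟩ ⟨j, j'⟩
    show d i * d' i' * B (i, i') (j, j') = -(d j * d' j' * B (j, j') (i, i'))
    rw [hBf i i' j j', hBf j j' i i']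
    by_cases h1 : i' = j' ∧ ¬ eps i = eps j
    · obtain ⟨rfl, hne⟩ := h1
      rw [if_pos (show i' = i' ∧ ¬ eps i = eps j from ⟨rfl, hne⟩),
        if_pos (show i' = i' ∧ ¬ eps j = eps i from ⟨rfl, fun h => hne h.symm⟩),
        if_neg (show ¬(i = j ∧ ¬ eps' i' = eps' i') from by rintro ⟨_, h⟩; exact h rfl),
        if_neg (show ¬(j = i ∧ ¬ eps' i' = eps' i') from by rintro ⟨_, h⟩; exact h rfl)]
      by_cases hS : eps i = eps' i'
      · rw [if_pos (show eps i = eps' i' from hS),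
          if_neg (show ¬ eps j = eps' i' from fun h => hne (hS.trans h.symm))]
        simp only [add_zero]
        linear_combination d' i' * hsym i j
      · rw [if_neg (show ¬ eps i = eps' i' from hS),
          if_pos (show eps j = eps' i' from sq_bool_ne_ne (eps i) (eps j) (eps' i') hne hS)]
        simp only [add_zero]
        linear_combination (-(d' i') : ℤ) * hsym i j
    · by_cases h2 : i = j ∧ ¬ eps' i' = eps' j'
      · obtain ⟨rfl, hne⟩ := h2
        rw [if_neg h1,
          if_pos (show i = i ∧ ¬ eps' i' = eps' j' from ⟨rfl, hne⟩),
          if_pos (show i = i ∧ ¬ eps' j' = eps' i' from ⟨rfl, fun h => hne h.symm⟩),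
          if_neg (show ¬(j' = i' ∧ ¬ eps i = eps i) from by rintro ⟨_, h⟩; exact h rfl)]
        by_cases hS : eps i = eps' i'
        · rw [if_pos (show eps i = eps' i' from hS),
            if_neg (show ¬ eps i = eps' j' from fun h => hne (hS.symm.trans h))]
          simp only [zero_add]
          linear_combination (-(d i) : ℤ) * hsym' i' j'
        · rw [if_neg (show ¬ eps i = eps' i' from hS),
            if_pos (show eps i = eps' j' from
              (sq_bool_ne_ne (eps' i') (eps' j') (eps i) hne (fun h => hS h.symm)).symm)]
          simp only [zero_add]
          linear_combination (d i : ℤ) * hsym' i' j'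
      · rw [if_neg h1, if_neg h2,
          if_neg (show ¬(j' = i' ∧ ¬ eps j = eps i) from by
            rintro ⟨ha, hb⟩; exact h1 ⟨ha.symm, fun h => hb h.symm⟩),
          if_neg (show ¬(j = i ∧ ¬ eps' j' = eps' i') from by
            rintro ⟨ha, hb⟩; exact h2 ⟨ha.symm, fun h => hb h.symm⟩)]
        simp
  -- the (B2) sum condition
  have hT : ∀ p q : I × I', ((eps p.1 = eps' p.2) ↔ (eps q.1 = eps' q.2)) →
      (∑ k, (|B p k| * B k q + B p k * |B k q|) / 2) = 0 := by
    rintro ⟨i, i'⟩ ⟨j, j'⟩ hpq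
    replace hpq : (eps i = eps' i') ↔ (eps j = eps' j') := hpq
    have key : ∀ k k', ¬((k, k') = ((j : I), (i' : I'))) → ¬((k, k') = (i, j')) →
        (|B (i, i') (k, k')| * B (k, k') (j, j')
          + B (i, i') (k, k') * |B (k, k') (j, j')|) / 2 = 0 := by
      intro k k' hk1 hk2
      rw [hBf i i' k k', hBf k k' j j']
      by_cases hA1 : i' = k' ∧ ¬ eps i = eps k
      · obtain ⟨rfl, hik⟩ := hA1
        rw [if_pos (show i' = i' ∧ ¬ eps i = eps k from ⟨rfl, hik⟩),
          if_neg (show ¬(i = k ∧ ¬ eps' i' = eps' i') from by rintro ⟨_, h⟩; exact h rfl)]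
        simp only [add_zero]
        by_cases hB1 : i' = j' ∧ ¬ eps k = eps j
        · obtain ⟨rfl, hkj⟩ := hB1
          rw [if_pos (show i' = i' ∧ ¬ eps k = eps j from ⟨rfl, hkj⟩),
            if_neg (show ¬(k = j ∧ ¬ eps' i' = eps' i') from by rintro ⟨_, h⟩; exact h rfl)]
          simp only [add_zero]
          have hik' : i ≠ k := fun h => hik (h ▸ rfl)
          have hkj' : k ≠ j := fun h => hkj (h ▸ rfl)
          by_cases hS : eps i = eps' i'
          · rw [if_pos (show eps i = eps' i' from hS),
              if_neg (show ¬ eps k = eps' i' from fun h => hik (hS.trans h.symm))]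
            exact sq_Tnp _ _ (hoff i k hik') (by linarith [hoff k j hkj'])
          · rw [if_neg (show ¬ eps i = eps' i' from hS),
              if_pos (show eps k = eps' i' from sq_bool_ne_ne (eps i) (eps k) (eps' i') hik hS)]
            exact sq_Tpn _ _ (by linarith [hoff i k hik']) (hoff k j hkj')
        · rw [if_neg hB1]
          simp only [zero_add]
          by_cases hB2 : k = j ∧ ¬ eps' i' = eps' j'
          · exact absurd (by rw [hB2.1]) hk1
          · rw [if_neg hB2]; simp
      · rw [if_neg hA1]
        simp only [zero_add]
        by_cases hA2 : i = k ∧ ¬ eps' i' = eps' k'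
        · obtain ⟨rfl, hk'⟩ := hA2
          rw [if_pos (show i = i ∧ ¬ eps' i' = eps' k' from ⟨rfl, hk'⟩)]
          by_cases hB1 : k' = j' ∧ ¬ eps i = eps j
          · exact absurd (by rw [hB1.1]) hk2
          · rw [if_neg hB1]
            simp only [zero_add]
            by_cases hB2 : i = j ∧ ¬ eps' k' = eps' j'
            · rw [if_pos (show i = j ∧ ¬ eps' k' = eps' j' from hB2)]
              have hik'' : i' ≠ k' := fun h => hk' (h ▸ rfl)
              have hkj'' : k' ≠ j' := fun h => hB2.2 (h ▸ rfl)
              by_cases hS : eps i = eps' i'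
              · rw [if_pos (show eps i = eps' i' from hS),
                  if_neg (show ¬ eps i = eps' k' from fun h => hk' (hS.symm.trans h))]
                exact sq_Tpn _ _ (by linarith [hoff' i' k' hik'']) (hoff' k' j' hkj'')
              · rw [if_neg (show ¬ eps i = eps' i' from hS),
                  if_pos (show eps i = eps' k' from
                    (sq_bool_ne_ne (eps' i') (eps' k') (eps i) hk' (fun h => hS h.symm)).symm)]
                exact sq_Tnp _ _ (hoff' i' k' hik'') (by linarith [hoff' k' j' hkj''])
            · rw [if_neg hB2]; simp
        · rw [if_neg hA2]; simp
    by_cases hco : ((j, i') : I × I') = (i, j')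
    · apply Finset.sum_eq_zero
      rintro ⟨k, k'⟩ -
      by_cases h1 : ((k, k') : I × I') = (j, i')
      · rw [h1]
        obtain ⟨h5, h6⟩ : j = i ∧ i' = j' := by simpa [Prod.ext_iff] using hco
        have hz : B (i, i') (j, i') = 0 := by
          rw [hBf,
            if_neg (show ¬(i' = i' ∧ ¬ eps i = eps j) from by
              rintro ⟨_, h⟩; exact h (h5 ▸ rfl)),
            if_neg (show ¬(i = j ∧ ¬ eps' i' = eps' i') from by rintro ⟨_, h⟩; exact h rfl)]
          simp
        rw [hz]
        simp
      · by_cases h2 : ((k, k') : I × I') = (i, j')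
        · exact absurd (h2.trans hco.symm) h1
        · exact key k k' h1 h2
    · have hsplit : ∀ x ∈ (Finset.univ : Finset (I × I')),
          (|B (i, i') x| * B x (j, j') + B (i, i') x * |B x (j, j')|) / 2 =
          (if x = ((j, i') : I × I') then
            (|B (i, i') (j, i')| * B (j, i') (j, j')
              + B (i, i') (j, i') * |B (j, i') (j, j')|) / 2 else 0)
          + (if x = ((i, j') : I × I') then
            (|B (i, i') (i, j')| * B (i, j') (j, j')
              + B (i, i') (i, j') * |B (i, j') (j, j')|) / 2 else 0) := by
        rintro ⟨k, k'⟩ -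
        by_cases h1 : ((k, k') : I × I') = (j, i')
        · rw [if_pos h1, if_neg (show ¬((k, k') : I × I') = (i, j') from
            fun h => hco (h1.symm.trans h)), h1, add_zero]
        · by_cases h2 : ((k, k') : I × I') = (i, j')
          · rw [if_neg h1, if_pos h2, h2, zero_add]
          · rw [if_neg h1, if_neg h2, key k k' h1 h2, add_zero]
      rw [Finset.sum_congr rfl hsplit, Finset.sum_add_distrib,
        Finset.sum_ite_eq' Finset.univ ((j, i') : I × I'),
        Finset.sum_ite_eq' Finset.univ ((i, j') : I × I')]
      simp only [Finset.mem_univ, if_true]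
      -- cancellation of the two remaining terms
      by_cases heij : eps i = eps j
      · have e1 : B (i, i') (j, i') = 0 := by
          rw [hBf,
            if_neg (show ¬(i' = i' ∧ ¬ eps i = eps j) from by rintro ⟨_, h⟩; exact h heij),
            if_neg (show ¬(i = j ∧ ¬ eps' i' = eps' i') from by rintro ⟨_, h⟩; exact h rfl)]
          simp
        have e2 : B (i, j') (j, j') = 0 := by
          rw [hBf,
            if_neg (show ¬(j' = j' ∧ ¬ eps i = eps j) from by rintro ⟨_, h⟩; exact h heij),
            if_neg (show ¬(i = j ∧ ¬ eps' j' = eps' j') from by rintro ⟨_, h⟩; exact h rfl)]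
          simp
        rw [e1, e2]
        simp
      · by_cases he'ij : eps' i' = eps' j'
        · have e1 : B (j, i') (j, j') = 0 := by
            rw [hBf,
              if_neg (show ¬(i' = j' ∧ ¬ eps j = eps j) from by rintro ⟨_, h⟩; exact h rfl),
              if_neg (show ¬(j = j ∧ ¬ eps' i' = eps' j') from by rintro ⟨_, h⟩; exact h he'ij)]
            simp
          have e2 : B (i, i') (i, j') = 0 := by
            rw [hBf,
              if_neg (show ¬(i' = j' ∧ ¬ eps i = eps i) from by rintro ⟨_, h⟩; exact h rfl),
              if_neg (show ¬(i = i ∧ ¬ eps' i' = eps' j') from by rintro ⟨_, h⟩; exact h he'ij)]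
            simp
          rw [e1, e2]
          simp
        · -- the genuine cancellation case
          have hij : i ≠ j := fun h => heij (h ▸ rfl)
          have hij' : i' ≠ j' := fun h => he'ij (h ▸ rfl)
          have hc1 : C i j ≤ 0 := hoff i j hij
          have hc2 : C' i' j' ≤ 0 := hoff' i' j' hij'
          have e1 : B (i, i') (j, i') =
              (if eps i = eps' i' then C i j else -C i j) := by
            rw [hBf,
              if_pos (show i' = i' ∧ ¬ eps i = eps j from ⟨rfl, heij⟩),
              if_neg (show ¬(i = j ∧ ¬ eps' i' = eps' i') from by rintro ⟨_, h⟩; exact h rfl)]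
            simp
          have e2 : B (j, i') (j, j') =
              (if eps j = eps' i' then -C' i' j' else C' i' j') := by
            rw [hBf,
              if_neg (show ¬(i' = j' ∧ ¬ eps j = eps j) from by rintro ⟨_, h⟩; exact h rfl),
              if_pos (show j = j ∧ ¬ eps' i' = eps' j' from ⟨rfl, he'ij⟩)]
            simp
          have e3 : B (i, i') (i, j') =
              (if eps i = eps' i' then -C' i' j' else C' i' j') := by
            rw [hBf,
              if_neg (show ¬(i' = j' ∧ ¬ eps i = eps i) from by rintro ⟨_, h⟩; exact h rfl),
              if_pos (show i = i ∧ ¬ eps' i' = eps' j' from ⟨rfl, he'ij⟩)]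
            simp
          have e4 : B (i, j') (j, j') =
              (if eps i = eps' j' then C i j else -C i j) := by
            rw [hBf,
              if_pos (show j' = j' ∧ ¬ eps i = eps j from ⟨rfl, heij⟩),
              if_neg (show ¬(i = j ∧ ¬ eps' j' = eps' j') from by rintro ⟨_, h⟩; exact h rfl)]
            simp
          rw [e1, e2, e3, e4]
          by_cases hS : eps i = eps' i'
          · have hx : ¬ eps j = eps' i' := fun h => heij (hS.trans h.symm)
            have hy : ¬ eps i = eps' j' := fun h => he'ij (hS.symm.trans h)
            rw [if_pos hS, if_neg hx, if_pos hS, if_neg hy]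
            rw [sq_Tnn _ _ hc1 hc2, sq_Tpp _ _ (by linarith) (by linarith)]
            ring
          · have hx : eps j = eps' i' := sq_bool_ne_ne (eps i) (eps j) (eps' i') heij hS
            have hy : eps i = eps' j' := (sq_bool_ne_ne (eps' i') (eps' j') (eps i)
              he'ij (fun h => hS h.symm)).symm
            rw [if_neg hS, if_pos hx, if_neg hS, if_pos hy]
            rw [sq_Tpp _ _ (by linarith) (by linarith), sq_Tnn _ _ hc2 hc1]
            ring
  refine ⟨hskew, ?_, ?_, ?_⟩
  · intro p q hBne h
    exact hBne (hQ0 p q (h ▸ Iff.rfl))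
  · intro l hnd hmem
    exact sq_fold_neg B (fun p => eps p.1 = eps' p.2) hQ0
      (fun p q hp hq => hT p q (iff_of_false hp hq)) l hnd hmem
  · intro l hnd hmem
    exact sq_fold_neg B (fun p => ¬(eps p.1 = eps' p.2))
      (fun p q h => hQ0 p q (not_iff_not.mp h))
      (fun p q hp hq => hT p q (iff_of_true (not_not.mp hp) (not_not.mp hq))) l hnd hmem
end

section
/- Let B be a skew-symmetrizable integer matrix on a finite set I = I_+ ⊔ I_− satisfying conditions (B1) and (B2). Let R be a commutative ring and T = {T_i(u) ∈ R^× : i ∈ I, u ∈ ℤ} a family of invertible elements satisfying the T-system T(B): T_i(u−1)T_i(u+1) = ∏_{j: B_{ji}>0} T_j(u)^{B_{ji}} + ∏_{j: B_{ji}<0} T_j(u)^{−B_{ji}}. Define Y_i(u) = ∏_{j∈I} T_j(u)^{B_{ji}} for i ∈ I_+ and Y_i(u) = ∏_{j∈I} T_j(u)^{−B_{ji}} for i ∈ I_−, and assume each Y_i(u) ∈ R^× and 1 + Y_i(u) ∈ R^×. Then Y satisfies the Y-system Y_+(B): for i ∈ I_+, Y_i(u−1)Y_i(u+1) = ∏_{j: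 B_{ji}>0}(1+Y_j(u))^{B_{ji}} / ∏_{j: B_{ji}<0}(1+Y_j(u)^{−1})^{−B_{ji}}, and for i ∈ I_−, Y_i(u−1)Y_i(u+1) = ∏_{j: B_{ji}<0}(1+Y_j(u))^{−B_{ji}} / ∏_{j: B_{ji}>0}(1+Y_j(u)^{−1})^{B_{ji}}. -/
open Finset

private lemma zpow_sum_aux {G : Type*} [CommGroup G] {I : Type*} (s : Finset I)
    (x : G) (e : I → ℤ) : ∏ j ∈ s, x ^ e j = x ^ ∑ j ∈ s, e j := by
  induction s using Finset.cons_induction with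
  | empty => simp
  | cons a s ha ih => rw [prod_cons, sum_cons, ih, zpow_add]

private lemma prod_zpow_split {G : Type*} [CommGroup G] {I : Type*} [Fintype I]
    [DecidableEq I] (x : I → G) (c : I → ℤ) :
    ∏ k, x k ^ c k =
      (∏ k ∈ univ.filter (fun k => 0 < c k), x k ^ c k) *
        ∏ k ∈ univ.filter (fun k => c k < 0), x k ^ c k := by
  rw [← prod_filter_mul_prod_filter_not univ (fun k => 0 < c k)]
  congr 1
  refine (prod_subset ?_ ?_).symm
  · intro k hk
    simp only [mem_filter, mem_univ, true_and] at hk ⊢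
    omega
  · intro k hk hk'
    simp only [mem_filter, mem_univ, true_and] at hk hk'
    have : c k = 0 := by omega
    simp [this]

private lemma val_prod {R : Type*} [CommRing R] {I : Type*} (s : Finset I) (f : I → Rˣ) :
    ((∏ j ∈ s, f j : Rˣ) : R) = ∏ j ∈ s, ((f j : Rˣ) : R) :=
  map_prod (Units.coeHom R) f s

private lemma key {I R : Type*} [Fintype I] [DecidableEq I] [CommRing R]
    (B : I → I → ℤ) (eps : I → Bool)
    (hB1 : ∀ i j, B i j ≠ 0 → eps i ≠ eps j)
    (hB2 : ∀ i j, eps i = eps j →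
      (∑ k ∈ Finset.univ.filter (fun k => 0 < B i k ∧ 0 < B k j), B i k * B k j) =
        ∑ k ∈ Finset.univ.filter (fun k => B i k < 0 ∧ B k j < 0), B i k * B k j)
    (T : I → ℤ → Rˣ)
    (hT : ∀ i u, ((T i (u - 1) * T i (u + 1) : Rˣ) : R) =
      ((∏ j ∈ Finset.univ.filter (fun j => 0 < B j i), T j u ^ (B j i) : Rˣ) : R) +
        ((∏ j ∈ Finset.univ.filter (fun j => B j i < 0), T j u ^ (-(B j i)) : Rˣ) : R))
    (Y : I → ℤ → Rˣ)
    (hY : ∀ i u, Y i u = ∏ j, T j u ^ (if eps i = true then B j i else -(B j i)))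
    (hY1 : ∀ i u, IsUnit ((1 : R) + ((Y i u : Rˣ) : R))) :
    ∀ i u, eps i = true →
      ((Y i (u - 1) * Y i (u + 1) : Rˣ) : R) *
          ∏ j ∈ Finset.univ.filter (fun j => B j i < 0),
            ((1 : R) + (((Y j u)⁻¹ : Rˣ) : R)) ^ (-(B j i)).toNat =
        ∏ j ∈ Finset.univ.filter (fun j => 0 < B j i),
          ((1 : R) + ((Y j u : Rˣ) : R)) ^ (B j i).toNat := by
  intro i u hi
  set P : I → Rˣ := fun j => ∏ k ∈ univ.filter (fun k => 0 < B k j), T k u ^ (B k j) with hPdef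
  set M : I → Rˣ := fun j => ∏ k ∈ univ.filter (fun k => B k j < 0), T k u ^ (-(B k j)) with hMdef
  set V : I → Rˣ := fun j => (hY1 j u).unit with hVdef
  have hVcoe : ∀ j, ((V j : Rˣ) : R) = 1 + ((Y j u : Rˣ) : R) := fun j => (hY1 j u).unit_spec
  -- eps of neighbours of i is false
  have hepsf : ∀ j, B j i ≠ 0 → eps j = false := by
    intro j hj
    have h := hB1 j i hj
    rw [hi] at h
    cases hj' : eps j
    · rfl
    · exact absurd hj' h
  -- Y j u = M j * (P j)⁻¹ for eps j = false
  have hYMP : ∀ j, eps j = false → Y j u = M j * (P j)⁻¹ := by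
    intro j hj
    have h0 : Y j u = ∏ k, T k u ^ (-(B k j)) := by
      rw [hY j u, hj]; simp
    rw [h0, prod_zpow_split (fun k => T k u) (fun k => -(B k j))]
    congr 1
    · rw [hMdef]
      exact prod_congr (filter_congr (fun k _ => by omega)) (fun k _ => rfl)
    · rw [hPdef, ← prod_inv_distrib]
      exact prod_congr (filter_congr (fun k _ => by omega)) (fun k _ => (zpow_neg _ _))
  -- S j = P j * V j  and  S j = M j * (V j * (Y j u)⁻¹)  for eps j = false
  have hS : ∀ j, eps j = false → T j (u - 1) * T j (u + 1) = P j * V j := by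
    intro j hj
    refine Units.ext ?_
    rw [hT j u]
    have h1 : ((P j * V j : Rˣ) : R) = (P j : R) * (1 + (Y j u : R)) := by
      rw [Units.val_mul, hVcoe]
    have h2 : (P j) * (Y j u) = M j := by
      rw [hYMP j hj, mul_comm, mul_assoc, inv_mul_cancel, mul_one]
    rw [h1, mul_add, mul_one, ← Units.val_mul, h2]
  have hS' : ∀ j, eps j = false →
      T j (u - 1) * T j (u + 1) = M j * (V j * (Y j u)⁻¹) := by
    intro j hj
    rw [hS j hj, hYMP j hj, mul_inv, inv_inv, mul_left_comm (M j), mul_inv_cancel_left,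
      mul_comm]
  -- Y i (u±1) recursion
  have hYi : Y i (u - 1) * Y i (u + 1) = ∏ j, (T j (u - 1) * T j (u + 1)) ^ (B j i) := by
    rw [hY i (u - 1), hY i (u + 1), hi]
    simp only [if_pos]
    rw [← prod_mul_distrib]
    exact prod_congr rfl fun j _ => (mul_zpow _ _ _).symm
  have hplus : ∏ j ∈ univ.filter (fun j => 0 < B j i), (T j (u-1) * T j (u+1)) ^ (B j i)
      = (∏ j ∈ univ.filter (fun j => 0 < B j i), P j ^ (B j i)) *
        ∏ j ∈ univ.filter (fun j => 0 < B j i), V j ^ (B j i) := by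
    rw [← prod_mul_distrib]
    refine prod_congr rfl fun j hj => ?_
    have hj0 : 0 < B j i := (mem_filter.mp hj).2
    rw [hS j (hepsf j (by omega)), mul_zpow]
  have hminus : ∏ j ∈ univ.filter (fun j => B j i < 0), (T j (u-1) * T j (u+1)) ^ (B j i)
      = (∏ j ∈ univ.filter (fun j => B j i < 0), M j ^ (B j i)) *
        ∏ j ∈ univ.filter (fun j => B j i < 0), (V j * (Y j u)⁻¹) ^ (B j i) := by
    rw [← prod_mul_distrib]
    refine prod_congr rfl fun j hj => ?_
    have hj0 : B j i < 0 := (mem_filter.mp hj).2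
    rw [hS' j (hepsf j (by omega)), mul_zpow]
  -- the (B2) cancellation
  have hexp : ∀ k, (∑ j ∈ univ.filter (fun j => 0 < B j i),
        (if 0 < B k j then B k j else 0) * B j i)
      + ∑ j ∈ univ.filter (fun j => B j i < 0),
        (if B k j < 0 then -(B k j) else 0) * B j i = 0 := by
    intro k
    rw [Finset.sum_filter, Finset.sum_filter, ← Finset.sum_add_distrib]
    have hpt : ∀ j, ((if 0 < B j i then (if 0 < B k j then B k j else 0) * B j i else 0)
        + if B j i < 0 then (if B k j < 0 then -(B k j) else 0) * B j i else 0)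
        = (if 0 < B k j ∧ 0 < B j i then B k j * B j i else 0)
          - (if B k j < 0 ∧ B j i < 0 then B k j * B j i else 0) := by
      intro j
      by_cases h1 : 0 < B j i <;> by_cases h2 : 0 < B k j <;>
        by_cases h3 : B j i < 0 <;> by_cases h4 : B k j < 0 <;>
          simp [h1, h2, h3, h4] <;> first | ring | omega | (exfalso; omega)
    rw [Finset.sum_congr rfl fun j _ => hpt j, Finset.sum_sub_distrib]
    cases hk : eps k with
    | false =>
      have hno1 : ∀ j, ¬(0 < B k j ∧ 0 < B j i) := by
        intro j
        rintro ⟨h1, h2⟩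
        have e1 := hB1 k j (by omega)
        have e2 := hB1 j i (by omega)
        rw [hk] at e1
        rw [hi] at e2
        cases hj : eps j
        · exact e1 hj.symm
        · exact e2 hj
      have hno2 : ∀ j, ¬(B k j < 0 ∧ B j i < 0) := by
        intro j
        rintro ⟨h1, h2⟩
        have e1 := hB1 k j (by omega)
        have e2 := hB1 j i (by omega)
        rw [hk] at e1
        rw [hi] at e2
        cases hj : eps j
        · exact e1 hj.symm
        · exact e2 hj
      rw [Finset.sum_congr rfl (fun j _ => if_neg (hno1 j)),
        Finset.sum_congr rfl (fun j _ => if_neg (hno2 j)),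
        Finset.sum_const_zero, sub_self]
    | true =>
      rw [← Finset.sum_filter, ← Finset.sum_filter, hB2 k i (by rw [hk, hi]), sub_self]
  have hPM : (∏ j ∈ univ.filter (fun j => 0 < B j i), P j ^ (B j i)) *
      ∏ j ∈ univ.filter (fun j => B j i < 0), M j ^ (B j i) = 1 := by
    have hPe : ∀ j, P j ^ (B j i) = ∏ k, T k u ^ ((if 0 < B k j then B k j else 0) * B j i) := by
      intro j
      have : P j = ∏ k, T k u ^ (if 0 < B k j then B k j else 0) := by
        simp only [hPdef]
        rw [Finset.prod_filter]
        exact prod_congr rfl fun k _ => by split <;> simp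
      rw [this, ← Finset.prod_zpow]
      exact prod_congr rfl fun k _ => (zpow_mul _ _ _).symm
    have hMe : ∀ j, M j ^ (B j i) = ∏ k, T k u ^ ((if B k j < 0 then -(B k j) else 0) * B j i) := by
      intro j
      have : M j = ∏ k, T k u ^ (if B k j < 0 then -(B k j) else 0) := by
        simp only [hMdef]
        rw [Finset.prod_filter]
        exact prod_congr rfl fun k _ => by split <;> simp
      rw [this, ← Finset.prod_zpow]
      exact prod_congr rfl fun k _ => (zpow_mul _ _ _).symm
    rw [Finset.prod_congr rfl fun j _ => hPe j, Finset.prod_congr rfl fun j _ => hMe j,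
      Finset.prod_comm, Finset.prod_comm (s := univ.filter (fun j => B j i < 0)),
      ← prod_mul_distrib]
    refine prod_eq_one fun k _ => ?_
    rw [zpow_sum_aux, zpow_sum_aux, ← zpow_add, hexp k, zpow_zero]
  -- combine
  have hYY : Y i (u - 1) * Y i (u + 1)
      = (∏ j ∈ univ.filter (fun j => 0 < B j i), V j ^ (B j i)) *
        ∏ j ∈ univ.filter (fun j => B j i < 0), (V j * (Y j u)⁻¹) ^ (B j i) := by
    rw [hYi, prod_zpow_split (fun j => T j (u-1) * T j (u+1)) (fun j => B j i),
      hplus, hminus, mul_mul_mul_comm, hPM, one_mul]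
  have hfin : (Y i (u - 1) * Y i (u + 1)) *
      ∏ j ∈ univ.filter (fun j => B j i < 0), (V j * (Y j u)⁻¹) ^ ((-(B j i)).toNat)
      = ∏ j ∈ univ.filter (fun j => 0 < B j i), V j ^ ((B j i).toNat) := by
    rw [hYY, mul_assoc, ← prod_mul_distrib]
    have h1 : ∏ j ∈ univ.filter (fun j => B j i < 0),
        ((V j * (Y j u)⁻¹) ^ (B j i) * (V j * (Y j u)⁻¹) ^ ((-(B j i)).toNat)) = 1 := by
      refine prod_eq_one fun j hj => ?_
      have hj0 : B j i < 0 := (mem_filter.mp hj).2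
      rw [← zpow_natCast (V j * (Y j u)⁻¹) ((-(B j i)).toNat),
        Int.toNat_of_nonneg (by omega), ← zpow_add]
      simp
    rw [h1, mul_one]
    refine prod_congr rfl fun j hj => ?_
    have hj0 : 0 < B j i := (mem_filter.mp hj).2
    rw [← zpow_natCast (V j) ((B j i).toNat), Int.toNat_of_nonneg (by omega)]
  -- pass to R
  have hVY : ∀ j, ((V j * (Y j u)⁻¹ : Rˣ) : R) = 1 + (((Y j u)⁻¹ : Rˣ) : R) := by
    intro j
    rw [Units.val_mul, hVcoe, add_mul, one_mul, Units.mul_inv, add_comm]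
  have hcoe := congrArg (Units.val) hfin
  rw [Units.val_mul, val_prod, val_prod] at hcoe
  calc ((Y i (u - 1) * Y i (u + 1) : Rˣ) : R) *
      ∏ j ∈ univ.filter (fun j => B j i < 0),
        ((1 : R) + (((Y j u)⁻¹ : Rˣ) : R)) ^ (-(B j i)).toNat
      = ((Y i (u - 1) * Y i (u + 1) : Rˣ) : R) *
        ∏ j ∈ univ.filter (fun j => B j i < 0),
          (((V j * (Y j u)⁻¹) ^ ((-(B j i)).toNat) : Rˣ) : R) := by
        congr 1
        exact prod_congr rfl fun j _ => by
          rw [Units.val_pow_eq_pow_val, hVY j]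
    _ = ∏ j ∈ univ.filter (fun j => 0 < B j i),
          ((V j ^ ((B j i).toNat) : Rˣ) : R) := hcoe
    _ = ∏ j ∈ univ.filter (fun j => 0 < B j i),
          ((1 : R) + ((Y j u : Rˣ) : R)) ^ (B j i).toNat := by
        exact prod_congr rfl fun j _ => by
          rw [Units.val_pow_eq_pow_val, hVcoe]

/-- Theorem 6.7 (first half): if a family of invertible elements `T i u` satisfies the
T-system `T(B)` associated with a skew-symmetrizable matrix `B` obeying conditions
(B1) and (B2), then `Y i u := ∏_j T j u ^ (±B_{ji})` (sign `+` on `I_+`, `−` on `I_−`)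
satisfies the Y-system `Y_+(B)` (written in multiplicative form). -/
theorem T_system_to_Y_plus {I R : Type*} [Fintype I] [DecidableEq I] [CommRing R]
    (B : I → I → ℤ) (eps : I → Bool) (d : I → ℤ) (hd : ∀ i, 0 < d i)
    (hskew : ∀ i j, d i * B i j = -(d j * B j i))
    (hB1 : ∀ i j, B i j ≠ 0 → eps i ≠ eps j)
    (hB2 : ∀ i j, eps i = eps j →
      (∑ k ∈ Finset.univ.filter (fun k => 0 < B i k ∧ 0 < B k j), B i k * B k j) =
        ∑ k ∈ Finset.univ.filter (fun k => B i k < 0 ∧ B k j < 0), B i k * B k j)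
    (T : I → ℤ → Rˣ)
    (hT : ∀ i u, ((T i (u - 1) * T i (u + 1) : Rˣ) : R) =
      ((∏ j ∈ Finset.univ.filter (fun j => 0 < B j i), T j u ^ (B j i) : Rˣ) : R) +
        ((∏ j ∈ Finset.univ.filter (fun j => B j i < 0), T j u ^ (-(B j i)) : Rˣ) : R))
    (Y : I → ℤ → Rˣ)
    (hY : ∀ i u, Y i u = ∏ j, T j u ^ (if eps i = true then B j i else -(B j i)))
    (hY1 : ∀ i u, IsUnit ((1 : R) + ((Y i u : Rˣ) : R))) :
    (∀ i u, eps i = true →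
      ((Y i (u - 1) * Y i (u + 1) : Rˣ) : R) *
          ∏ j ∈ Finset.univ.filter (fun j => B j i < 0),
            ((1 : R) + (((Y j u)⁻¹ : Rˣ) : R)) ^ (-(B j i)).toNat =
        ∏ j ∈ Finset.univ.filter (fun j => 0 < B j i),
          ((1 : R) + ((Y j u : Rˣ) : R)) ^ (B j i).toNat) ∧
    (∀ i u, eps i = false →
      ((Y i (u - 1) * Y i (u + 1) : Rˣ) : R) *
          ∏ j ∈ Finset.univ.filter (fun j => 0 < B j i),
            ((1 : R) + (((Y j u)⁻¹ : Rˣ) : R)) ^ (B j i).toNat =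
        ∏ j ∈ Finset.univ.filter (fun j => B j i < 0),
          ((1 : R) + ((Y j u : Rˣ) : R)) ^ (-(B j i)).toNat) := by
  constructor
  · exact key B eps hB1 hB2 T hT Y hY hY1
  · -- apply `key` to the matrix `-B` with the parts swapped
    have hB1' : ∀ i j, -(B i j) ≠ 0 → (!eps i) ≠ (!eps j) := by
      intro i j h hc
      exact hB1 i j (by omega) (by cases hi : eps i <;> cases hj : eps j <;> simp_all)
    have hB2' : ∀ i j, (!eps i) = (!eps j) →
        (∑ k ∈ Finset.univ.filter (fun k => 0 < -(B i k) ∧ 0 < -(B k j)),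
            -(B i k) * -(B k j)) =
          ∑ k ∈ Finset.univ.filter (fun k => -(B i k) < 0 ∧ -(B k j) < 0),
            -(B i k) * -(B k j) := by
      intro i j h
      have h' : eps i = eps j := by cases hi : eps i <;> cases hj : eps j <;> simp_all
      have e1 : (Finset.univ.filter (fun k => 0 < -(B i k) ∧ 0 < -(B k j)))
          = Finset.univ.filter (fun k => B i k < 0 ∧ B k j < 0) :=
        Finset.filter_congr fun k _ => by omega
      have e2 : (Finset.univ.filter (fun k => -(B i k) < 0 ∧ -(B k j) < 0))
          = Finset.univ.filter (fun k => 0 < B i k ∧ 0 < B k j) :=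
        Finset.filter_congr fun k _ => by omega
      rw [e1, e2, Finset.sum_congr rfl (fun k _ => neg_mul_neg (B i k) (B k j)),
        Finset.sum_congr rfl (fun k _ => neg_mul_neg (B i k) (B k j))]
      exact (hB2 i j h').symm
    have hT' : ∀ i u, ((T i (u - 1) * T i (u + 1) : Rˣ) : R) =
        ((∏ j ∈ Finset.univ.filter (fun j => 0 < -(B j i)), T j u ^ (-(B j i)) : Rˣ) : R) +
          ((∏ j ∈ Finset.univ.filter (fun j => -(B j i) < 0),
              T j u ^ (-(-(B j i))) : Rˣ) : R) := by
      intro i u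
      rw [hT i u, add_comm]
      congr 1
      · exact congrArg _ (Finset.prod_congr
          (Finset.filter_congr fun k _ => by omega) fun k _ => rfl)
      · exact congrArg _ (Finset.prod_congr
          (Finset.filter_congr fun k _ => by omega) fun k _ => by rw [neg_neg])
    have hY' : ∀ i u, Y i u =
        ∏ j, T j u ^ (if (!eps i) = true then -(B j i) else -(-(B j i))) := by
      intro i u
      rw [hY i u]
      refine Finset.prod_congr rfl fun j _ => ?_
      congr 1
      cases h : eps i <;> simp [h]
    have hmain := key (fun a b => -(B a b)) (fun a => !eps a) hB1' hB2' T hT' Y hY' hY1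
    intro i u hi
    have hthis := hmain i u (by simp [hi])
    simp only [neg_neg] at hthis
    rw [show Finset.univ.filter (fun j => -(B j i) < 0)
          = Finset.univ.filter (fun j => 0 < B j i) from
        Finset.filter_congr fun k _ => by omega,
      show Finset.univ.filter (fun j => 0 < -(B j i))
          = Finset.univ.filter (fun j => B j i < 0) from
        Finset.filter_congr fun k _ => by omega] at hthis
    exact hthis
end

section
/- Let P be a semifield (an abelian multiplicative group with an addition that is commutative, associative, and distributive over multiplication), B a skew-symmetrizable integer matrix satisfying (B1) and (B2) with I = I_+ ⊔ I_−, and y_i(u) ∈ P the coefficient tuples along the bipartite mutation sequence, where mutation μ_k transforms y via y'_k = y_k^{−1}, and y'_i = y_i(1 + y_k^{−1})^{−B_{ki}} if B_{ki} ≥ 0 (i ≠ k), y'_i = y_i(1 + y_k)^{−B_{ki}} if B_{ki} ≤ 0 (i ≠ k). Then y_i(u) = y_i(u+1)^{−1} whenever ε(i)(−1)^u = +, and y_i(u) = y_i(u−1)^{−1} whenever ε(i)(−1)^u = −; moreover for each ε ∈ {+,−}, the subfamily {y_i(u) : ε(i)(−1)^u = ε} satisfies the Y-system Y_ε(B). 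-/
/-!
By (B1), every `k` with `B_{ki} ≠ 0` lies in the class opposite to `i`, so it is mutated exactly
at the steps where `i` is not. Hence, whether or not `i` is mutated at step `u`, the ratio
`y_i(u-1) y_i(u+1)` is the full product over `k` of the mutation factors of `y_k(u)` with respect
to the exchange matrix `±B` at step `u`: this is the mutation rule at step `u` if `i` is not
mutated there, and otherwise the rule at step `u - 1`, because inverting both `y_k` and the sign
of the matrix inverts the factor. Sorting that product
by the sign of the matrix entries is the Y-system `Y_±(B)`.
-/

open Finset

section MutationFactor

variable {P : Type*} [CommGroup P] (add : P → P → P)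

/-- The ratio `y'_i / y_i` under the mutation `μ_k`, with `b = B_{ki}` and `x = y_k`. -/
def mutationFactor (b : ℤ) (x : P) : P :=
  (if 0 ≤ b then add 1 x⁻¹ else add 1 x) ^ (-b)

theorem mutationFactor_zero (x : P) : mutationFactor add 0 x = 1 := by
  simp [mutationFactor]

theorem inv_mutationFactor_neg_inv (b : ℤ) (x : P) :
    (mutationFactor add (-b) x⁻¹)⁻¹ = mutationFactor add b x := by
  unfold mutationFactor
  rcases lt_trichotomy b 0 with hb | rfl | hb
  · simp [hb.le, not_le.mpr hb]
  · simp
  · simp [hb.le, not_le.mpr hb]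

theorem prod_mutationFactor_mul_prod_pos {I : Type*} (s : Finset I) (b : I → ℤ) (x : I → P) :
    (∏ k ∈ s, mutationFactor add (b k) (x k)) * ∏ k ∈ s with 0 < b k, add 1 (x k)⁻¹ ^ b k =
      ∏ k ∈ s with b k < 0, add 1 (x k) ^ (-b k) := by
  rw [prod_filter, prod_filter, ← prod_mul_distrib]
  refine prod_congr rfl fun k _ => ?_
  unfold mutationFactor
  rcases lt_trichotomy (b k) 0 with hb | hb | hb
  · simp [hb, not_le.mpr hb, not_lt.mpr hb.le]
  · simp [hb]
  · simp [hb, hb.le, not_lt.mpr hb.le]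

end MutationFactor

section Bipartite

variable {I : Type*}

def bipartiteExchange (B : I → I → ℤ) (u : ℤ) (k i : I) : ℤ :=
  if Even u then B k i else -B k i

theorem bipartiteExchange_sub_one (B : I → I → ℤ) (u : ℤ) (k i : I) :
    bipartiteExchange B (u - 1) k i = -bipartiteExchange B u k i := by
  simp only [bipartiteExchange, Int.even_sub_one]
  split_ifs <;> simp

theorem bipartiteExchange_eq_zero {B : I → I → ℤ} {k i : I} (h : B k i = 0) (u : ℤ) :
    bipartiteExchange B u k i = 0 := by
  simp [bipartiteExchange, h]

theorem prod_filter_mutated_eq_prod {M : Type*} [Fintype I] [CommMonoid M] {B : I → I → ℤ}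
    {eps : I → Bool} (hB : ∀ i j, B i j ≠ 0 → eps i ≠ eps j) {i : I} {u : ℤ}
    (hi : ¬(eps i = true ↔ Even u)) (f : I → M) (hf : ∀ k, B k i = 0 → f k = 1) :
    ∏ k with (eps k = true ↔ Even u), f k = ∏ k, f k :=
  prod_filter_of_ne fun k _ hk => by
    have hki := hB k i (mt (hf k) hk)
    revert hki hi
    cases eps k <;> cases eps i <;> simp

/-- `y i u` is `y_i(u)`; the step `u → u + 1` mutates, with exchange matrix
`bipartiteExchange B u`, at every `i` with `ε(i)(-1)^u = +`, encoded as `eps i = true ↔ Even u`. -/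
structure IsBipartiteYSeq {P : Type*} [Fintype I] [CommGroup P] (add : P → P → P)
    (B : I → I → ℤ) (eps : I → Bool) (y : I → ℤ → P) : Prop where
  flip : ∀ i u, (eps i = true ↔ Even u) → y i (u + 1) = (y i u)⁻¹
  mutate : ∀ i u, ¬(eps i = true ↔ Even u) →
    y i (u + 1) = y i u *
      ∏ k with (eps k = true ↔ Even u), mutationFactor add (bipartiteExchange B u k i) (y k u)

namespace IsBipartiteYSeq

variable {P : Type*} [Fintype I] [CommGroup P] {add : P → P → P} {B : I → I → ℤ}
  {eps : I → Bool} {y : I → ℤ → P}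

theorem eq_inv_succ (hy : IsBipartiteYSeq add B eps y) {i : I} {u : ℤ}
    (h : eps i = true ↔ Even u) : y i u = (y i (u + 1))⁻¹ := by
  rw [hy.flip i u h, inv_inv]

theorem eq_inv_pred (hy : IsBipartiteYSeq add B eps y) {i : I} {u : ℤ}
    (h : ¬(eps i = true ↔ Even u)) : y i u = (y i (u - 1))⁻¹ := by
  have := hy.flip i (u - 1) (by rw [Int.even_sub_one]; tauto)
  rwa [sub_add_cancel] at this

theorem pred_mul_succ (hy : IsBipartiteYSeq add B eps y)
    (hB : ∀ i j, B i j ≠ 0 → eps i ≠ eps j) (i : I) (u : ℤ) :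
    y i (u - 1) * y i (u + 1) =
      ∏ k, mutationFactor add (bipartiteExchange B u k i) (y k u) := by
  have hvanish : ∀ k, B k i = 0 →
      mutationFactor add (bipartiteExchange B u k i) (y k u) = 1 := fun k hk => by
    rw [bipartiteExchange_eq_zero hk, mutationFactor_zero]
  by_cases h : eps i = true ↔ Even u
  · have h' : ¬(eps i = true ↔ Even (u - 1)) := by rw [Int.even_sub_one]; tauto
    have hprev := hy.mutate i (u - 1) h'
    rw [sub_add_cancel] at hprev
    calc y i (u - 1) * y i (u + 1)
        = (∏ k with (eps k = true ↔ Even (u - 1)),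
            mutationFactor add (bipartiteExchange B (u - 1) k i) (y k (u - 1)))⁻¹ := by
          rw [hy.flip i u h, hprev, mul_inv, mul_inv_cancel_left]
      _ = ∏ k with (eps k = true ↔ Even (u - 1)),
            mutationFactor add (bipartiteExchange B u k i) (y k u) := by
          rw [← prod_inv_distrib]
          refine prod_congr rfl fun k hk => ?_
          have hk' : ¬(eps k = true ↔ Even u) := by
            rw [mem_filter, Int.even_sub_one] at hk; tauto
          have hyk : y k (u - 1) = (y k u)⁻¹ := by rw [hy.eq_inv_pred hk', inv_inv]
          rw [hyk, bipartiteExchange_sub_one, inv_mutationFactor_neg_inv]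
      _ = _ := prod_filter_mutated_eq_prod hB h' _ hvanish
  · calc y i (u - 1) * y i (u + 1)
        = ∏ k with (eps k = true ↔ Even u),
            mutationFactor add (bipartiteExchange B u k i) (y k u) := by
          rw [hy.mutate i u h, hy.eq_inv_pred h, mul_inv_cancel_left]
      _ = _ := prod_filter_mutated_eq_prod hB h _ hvanish

theorem Y_system (hy : IsBipartiteYSeq add B eps y)
    (hB : ∀ i j, B i j ≠ 0 → eps i ≠ eps j) (i : I) (u : ℤ) :
    y i (u - 1) * y i (u + 1) *
        ∏ k with 0 < bipartiteExchange B u k i, add 1 (y k u)⁻¹ ^ bipartiteExchange B u k i =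
      ∏ k with bipartiteExchange B u k i < 0, add 1 (y k u) ^ (-bipartiteExchange B u k i) := by
  rw [hy.pred_mul_succ hB, prod_mutationFactor_mul_prod_pos]

theorem Y_system_of_even (hy : IsBipartiteYSeq add B eps y)
    (hB : ∀ i j, B i j ≠ 0 → eps i ≠ eps j) (i : I) {u : ℤ} (hu : Even u) :
    y i (u - 1) * y i (u + 1) * ∏ k with 0 < B k i, add 1 (y k u)⁻¹ ^ B k i =
      ∏ k with B k i < 0, add 1 (y k u) ^ (-B k i) := by
  simpa only [bipartiteExchange, if_pos hu] using hy.Y_system hB i u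

theorem Y_system_of_odd (hy : IsBipartiteYSeq add B eps y)
    (hB : ∀ i j, B i j ≠ 0 → eps i ≠ eps j) (i : I) {u : ℤ} (hu : ¬Even u) :
    y i (u - 1) * y i (u + 1) * ∏ k with B k i < 0, add 1 (y k u)⁻¹ ^ (-B k i) =
      ∏ k with 0 < B k i, add 1 (y k u) ^ B k i := by
  simpa only [bipartiteExchange, if_neg hu, Left.neg_pos_iff, Left.neg_neg_iff, neg_neg]
    using hy.Y_system hB i u

end IsBipartiteYSeq

end Bipartite

theorem coefficients_satisfy_Y_system_general {I P : Type*} [Fintype I]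
    [CommGroup P] (add : P → P → P)
    (B : I → I → ℤ) (eps : I → Bool)
    (hB1 : ∀ i j, B i j ≠ 0 → eps i ≠ eps j)
    (y : I → ℤ → P)
    (hflip : ∀ i u, ((eps i = true) ↔ Even u) → y i (u + 1) = (y i u)⁻¹)
    (hcorr : ∀ i u, ¬((eps i = true) ↔ Even u) →
      y i (u + 1) = y i u *
        ∏ k ∈ Finset.univ.filter (fun k => (eps k = true) ↔ Even u),
          (if 0 ≤ (if Even u then B k i else -B k i) then add 1 ((y k u)⁻¹)
            else add 1 (y k u)) ^ (-(if Even u then B k i else -B k i))) :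
    (∀ i u, ((eps i = true) ↔ Even u) → y i u = (y i (u + 1))⁻¹) ∧
    (∀ i u, ¬((eps i = true) ↔ Even u) → y i u = (y i (u - 1))⁻¹) ∧
    -- the subfamily on `ε(i)(−1)^u = +` satisfies `Y_+(B)`
    (∀ i u, ¬((eps i = true) ↔ Even u) →
      (eps i = true →
        y i (u - 1) * y i (u + 1) *
            ∏ k ∈ Finset.univ.filter (fun k => B k i < 0),
              (add 1 ((y k u)⁻¹)) ^ (-(B k i)) =
          ∏ k ∈ Finset.univ.filter (fun k => 0 < B k i),
            (add 1 (y k u)) ^ (B k i)) ∧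
      (eps i = false →
        y i (u - 1) * y i (u + 1) *
            ∏ k ∈ Finset.univ.filter (fun k => 0 < B k i),
              (add 1 ((y k u)⁻¹)) ^ (B k i) =
          ∏ k ∈ Finset.univ.filter (fun k => B k i < 0),
            (add 1 (y k u)) ^ (-(B k i)))) ∧
    -- the subfamily on `ε(i)(−1)^u = −` satisfies `Y_−(B)`
    (∀ i u, ((eps i = true) ↔ Even u) →
      (eps i = true →
        y i (u - 1) * y i (u + 1) *
            ∏ k ∈ Finset.univ.filter (fun k => 0 < B k i),
              (add 1 ((y k u)⁻¹)) ^ (B k i) =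
          ∏ k ∈ Finset.univ.filter (fun k => B k i < 0),
            (add 1 (y k u)) ^ (-(B k i))) ∧
      (eps i = false →
        y i (u - 1) * y i (u + 1) *
            ∏ k ∈ Finset.univ.filter (fun k => B k i < 0),
              (add 1 ((y k u)⁻¹)) ^ (-(B k i)) =
          ∏ k ∈ Finset.univ.filter (fun k => 0 < B k i),
            (add 1 (y k u)) ^ (B k i))) := by
  have hy : IsBipartiteYSeq add B eps y := ⟨hflip, hcorr⟩
  refine ⟨fun i u h => hy.eq_inv_succ h, fun i u h => hy.eq_inv_pred h,
    fun i u h => ⟨fun hi => ?_, fun hi => ?_⟩, fun i u h => ⟨fun hi => ?_, fun hi => ?_⟩⟩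
  · exact hy.Y_system_of_odd hB1 i (by simpa [hi] using h)
  · exact hy.Y_system_of_even hB1 i (by simpa [hi] using h)
  · exact hy.Y_system_of_even hB1 i (by simpa [hi] using h)
  · exact hy.Y_system_of_odd hB1 i (by simpa [hi] using h)

/-- Lemma 6.17: along the bipartite mutation sequence, the coefficient tuples
`y_i(u)` in a semifield `P` (a commutative multiplicative group with a commutative,
associative addition distributive over multiplication) satisfy
`y_i(u) = y_i(u+1)^{−1}` whenever `ε(i)(−1)^u = +`, `y_i(u) = y_i(u−1)^{−1}`
whenever `ε(i)(−1)^u = −`, and for each sign `ε` the subfamily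
`{y_i(u) : ε(i)(−1)^u = ε}` satisfies the Y-system `Y_ε(B)` (in multiplicative
form). Here `ε(i)(−1)^u = +` is encoded by `eps i = true ↔ Even u`, the indices
mutated at step `u → u+1` are exactly those with `ε(i)(−1)^u = +`, and the exchange
matrix at step `u` is `B` for even `u` and `−B` for odd `u`. -/
theorem coefficients_satisfy_Y_system {I P : Type*} [Fintype I] [DecidableEq I]
    [CommGroup P] (add : P → P → P)
    (haddcomm : ∀ a b, add a b = add b a)
    (haddassoc : ∀ a b c, add (add a b) c = add a (add b c))
    (hdistrib : ∀ a b c, a * add b c = add (a * b) (a * c))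
    (B : I → I → ℤ) (eps : I → Bool) (d : I → ℤ) (hd : ∀ i, 0 < d i)
    (hskew : ∀ i j, d i * B i j = -(d j * B j i))
    (hB1 : ∀ i j, B i j ≠ 0 → eps i ≠ eps j)
    (hB2 : ∀ i j, eps i = eps j →
      (∑ k ∈ Finset.univ.filter (fun k => 0 < B i k ∧ 0 < B k j), B i k * B k j) =
        ∑ k ∈ Finset.univ.filter (fun k => B i k < 0 ∧ B k j < 0), B i k * B k j)
    (y : I → ℤ → P)
    (hflip : ∀ i u, ((eps i = true) ↔ Even u) → y i (u + 1) = (y i u)⁻¹)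
    (hcorr : ∀ i u, ¬((eps i = true) ↔ Even u) →
      y i (u + 1) = y i u *
        ∏ k ∈ Finset.univ.filter (fun k => (eps k = true) ↔ Even u),
          (if 0 ≤ (if Even u then B k i else -B k i) then add 1 ((y k u)⁻¹)
            else add 1 (y k u)) ^ (-(if Even u then B k i else -B k i))) :
    (∀ i u, ((eps i = true) ↔ Even u) → y i u = (y i (u + 1))⁻¹) ∧
    (∀ i u, ¬((eps i = true) ↔ Even u) → y i u = (y i (u - 1))⁻¹) ∧
    -- the subfamily on `ε(i)(−1)^u = +` satisfies `Y_+(B)`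
    (∀ i u, ¬((eps i = true) ↔ Even u) →
      (eps i = true →
        y i (u - 1) * y i (u + 1) *
            ∏ k ∈ Finset.univ.filter (fun k => B k i < 0),
              (add 1 ((y k u)⁻¹)) ^ (-(B k i)) =
          ∏ k ∈ Finset.univ.filter (fun k => 0 < B k i),
            (add 1 (y k u)) ^ (B k i)) ∧
      (eps i = false →
        y i (u - 1) * y i (u + 1) *
            ∏ k ∈ Finset.univ.filter (fun k => 0 < B k i),
              (add 1 ((y k u)⁻¹)) ^ (B k i) =
          ∏ k ∈ Finset.univ.filter (fun k => B k i < 0),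
            (add 1 (y k u)) ^ (-(B k i)))) ∧
    -- the subfamily on `ε(i)(−1)^u = −` satisfies `Y_−(B)`
    (∀ i u, ((eps i = true) ↔ Even u) →
      (eps i = true →
        y i (u - 1) * y i (u + 1) *
            ∏ k ∈ Finset.univ.filter (fun k => 0 < B k i),
              (add 1 ((y k u)⁻¹)) ^ (B k i) =
          ∏ k ∈ Finset.univ.filter (fun k => B k i < 0),
            (add 1 (y k u)) ^ (-(B k i))) ∧
      (eps i = false →
        y i (u - 1) * y i (u + 1) *
            ∏ k ∈ Finset.univ.filter (fun k => B k i < 0),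
              (add 1 ((y k u)⁻¹)) ^ (-(B k i)) =
          ∏ k ∈ Finset.univ.filter (fun k => 0 < B k i),
            (add 1 (y k u)) ^ (B k i))) :=
  coefficients_satisfy_Y_system_general add B eps hB1 y hflip hcorr
end

section
/- Let C be a simply laced generalized Cartan matrix (C_{ab} ∈ {0,−1} for a ≠ b), R a commutative ring, and T^{(a)}_m(u) ∈ R^× a family indexed by a ∈ I, m ∈ ℕ, u ∈ ℤ satisfying the unrestricted T-system: T^{(a)}_m(u−1)T^{(a)}_m(u+1) = T^{(a)}_{m−1}(u)T^{(a)}_{m+1}(u) + ∏_{b: C_{ab}<0} T^{(b)}_m(u), with T^{(a)}_0(u) = 1. Define Y^{(a)}_m(u) = ∏_{b: C_{ab}<0} T^{(b)}_m(u) / (T^{(a)}_{m−1}(u)T^{(a)}_{m+1}(u)). Then 1 + Y^{(a)}_m(u) = T^{(a)}_m(u−1)T^{(a)}_m(u+1)/(T^{(a)}_{m−1}(u)T^{(a)}_{m+1}(u)), and Y satisfies the Y-system: Y^{(a)}_m(u−1)Y^{(a)}_m(u+1) = ∏_{b: C_{ab}<0}(1+Y^{(b)}_m(u)) / ((1+Y^{(a)}_{m−1}(u)^{−1})(1+Y^{(a)}_{m+1}(u)^{−1})),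 where Y^{(a)}_0(u)^{−1} = 0 by convention (i.e., the corresponding factor 1+Y^{(a)}_0(u)^{−1} is replaced by 1, and each Y^{(a)}_m(u) and 1+Y^{(a)}_m(u) is assumed invertible). -/
/-- Theorem 4.3(1), simply laced case: if the family `T^{(a)}_m(u)` of invertible
elements satisfies the unrestricted T-system associated with a simply laced
generalized Cartan matrix `C`, and
`Y^{(a)}_m(u) = ∏_{b∼a} T^{(b)}_m(u) / (T^{(a)}_{m−1}(u) T^{(a)}_{m+1}(u))`,
then `1 + Y^{(a)}_m(u) = T^{(a)}_m(u−1)T^{(a)}_m(u+1)/(T^{(a)}_{m−1}(u)T^{(a)}_{m+1}(u))`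
and `Y` satisfies the unrestricted Y-system (in multiplicative form, the boundary
factor `1 + Y^{(a)}_0(u)^{−1}` being replaced by `1`). -/
theorem unrestricted_T_to_Y_simply_laced {I R : Type*} [Fintype I] [DecidableEq I]
    [CommRing R] (C : I → I → ℤ)
    (hdiag : ∀ a, C a a = 2)
    (hsl : ∀ a b, a ≠ b → C a b = 0 ∨ C a b = -1)
    (hzero : ∀ a b, C a b = 0 ↔ C b a = 0)
    (T : I → ℕ → ℤ → Rˣ)
    (hT0 : ∀ a u, T a 0 u = 1)
    (hT : ∀ a (m : ℕ) (u : ℤ), 1 ≤ m →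
      ((T a m (u - 1) * T a m (u + 1) : Rˣ) : R) =
        ((T a (m - 1) u * T a (m + 1) u : Rˣ) : R) +
          ((∏ b ∈ Finset.univ.filter (fun b => C a b < 0), T b m u : Rˣ) : R))
    (Y : I → ℕ → ℤ → Rˣ)
    (hY : ∀ a (m : ℕ) (u : ℤ), 1 ≤ m →
      Y a m u = (∏ b ∈ Finset.univ.filter (fun b => C a b < 0), T b m u) *
        (T a (m - 1) u)⁻¹ * (T a (m + 1) u)⁻¹)
    (hinv : ∀ a (m : ℕ) (u : ℤ), 1 ≤ m → IsUnit ((1 : R) + ((Y a m u : Rˣ) : R))) :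
    (∀ a (m : ℕ) (u : ℤ), 1 ≤ m →
      ((1 : R) + ((Y a m u : Rˣ) : R)) * ((T a (m - 1) u * T a (m + 1) u : Rˣ) : R) =
        ((T a m (u - 1) * T a m (u + 1) : Rˣ) : R)) ∧
    (∀ a (m : ℕ) (u : ℤ), 1 ≤ m →
      ((Y a m (u - 1) * Y a m (u + 1) : Rˣ) : R) *
          (if m - 1 = 0 then 1 else (1 : R) + (((Y a (m - 1) u)⁻¹ : Rˣ) : R)) *
          ((1 : R) + (((Y a (m + 1) u)⁻¹ : Rˣ) : R)) =
        ∏ b ∈ Finset.univ.filter (fun b => C a b < 0),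
          ((1 : R) + ((Y b m u : Rˣ) : R))) := by
  classical
  have hYT : ∀ a (m : ℕ) (u : ℤ), 1 ≤ m →
      Y a m u * (T a (m - 1) u * T a (m + 1) u) =
        ∏ b ∈ Finset.univ.filter (fun b => C a b < 0), T b m u := by
    intro a m u hm
    rw [hY a m u hm, mul_mul_mul_comm, inv_mul_cancel, mul_one, inv_mul_cancel_right]
  have hYTc : ∀ a (m : ℕ) (u : ℤ), 1 ≤ m →
      ((Y a m u : Rˣ) : R) * (((T a (m - 1) u : Rˣ) : R) * ((T a (m + 1) u : Rˣ) : R)) =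
        ((∏ b ∈ Finset.univ.filter (fun b => C a b < 0), T b m u : Rˣ) : R) := by
    intro a m u hm
    have h := congrArg (Units.val) (hYT a m u hm)
    simpa only [Units.val_mul] using h
  have part1 : ∀ a (m : ℕ) (u : ℤ), 1 ≤ m →
      ((1 : R) + ((Y a m u : Rˣ) : R)) * ((T a (m - 1) u * T a (m + 1) u : Rˣ) : R) =
        ((T a m (u - 1) * T a m (u + 1) : Rˣ) : R) := by
    intro a m u hm
    have h1 := hYTc a m u hm
    have h2 := hT a m u hm
    simp only [Units.val_mul] at h2 ⊢
    linear_combination h1 - h2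
  have hvalinv : ∀ a (m : ℕ) (u : ℤ),
      (((Y a m u)⁻¹ : Rˣ) : R) * ((Y a m u : Rˣ) : R) = 1 := by
    intro a m u
    rw [← Units.val_mul, inv_mul_cancel, Units.val_one]
  refine ⟨part1, ?_⟩
  intro a m u hm
  obtain ⟨n, rfl⟩ : ∃ n, m = n + 1 := ⟨m - 1, (Nat.succ_pred_eq_of_pos hm).symm⟩
  simp only [Nat.add_sub_cancel]
  have hGfact : ∀ (k : ℕ), 1 ≤ k →
      ((1 : R) + (((Y a k u)⁻¹ : Rˣ) : R)) *
          ((∏ b ∈ Finset.univ.filter (fun b => C a b < 0), T b k u : Rˣ) : R) =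
        ((T a k (u - 1) : Rˣ) : R) * ((T a k (u + 1) : Rˣ) : R) := by
    intro k hk
    have h1 := hYTc a k u hk
    have h2 := hT a k u hk
    have h3 := hvalinv a k u
    simp only [Units.val_mul] at h2
    linear_combination (-((((Y a k u)⁻¹ : Rˣ) : R))) * h1 - h2 +
      (((T a (k - 1) u : Rˣ) : R) * ((T a (k + 1) u : Rˣ) : R)) * h3
  have f1 := hYTc a (n + 1) (u - 1) (Nat.le_add_left 1 n)
  have f2 := hYTc a (n + 1) (u + 1) (Nat.le_add_left 1 n)
  simp only [Nat.add_sub_cancel] at f1 f2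
  have f4 := hGfact (n + 1 + 1) (by omega)
  have f5 : (∏ b ∈ Finset.univ.filter (fun b => C a b < 0),
        ((1 : R) + ((Y b (n + 1) u : Rˣ) : R))) *
      (((∏ b ∈ Finset.univ.filter (fun b => C a b < 0), T b n u : Rˣ) : R) *
        ((∏ b ∈ Finset.univ.filter (fun b => C a b < 0), T b (n + 1 + 1) u : Rˣ) : R)) =
      ((∏ b ∈ Finset.univ.filter (fun b => C a b < 0), T b (n + 1) (u - 1) : Rˣ) : R) *
        ((∏ b ∈ Finset.univ.filter (fun b => C a b < 0), T b (n + 1) (u + 1) : Rˣ) : R) := by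
    have pc : ∀ (s : Finset I) (f : I → Rˣ),
        ((∏ b ∈ s, f b : Rˣ) : R) = ∏ b ∈ s, ((f b : Rˣ) : R) :=
      fun s f => map_prod (Units.coeHom R) f s
    rw [pc, pc, pc, pc, ← Finset.prod_mul_distrib, ← Finset.prod_mul_distrib,
      ← Finset.prod_mul_distrib]
    refine Finset.prod_congr rfl fun b _ => ?_
    have h := part1 b (n + 1) u (Nat.le_add_left 1 n)
    simp only [Nat.add_sub_cancel, Units.val_mul] at h
    exact h
  have main : ∀ F : R,
      F * ((∏ b ∈ Finset.univ.filter (fun b => C a b < 0), T b n u : Rˣ) : R) =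
          ((T a n (u - 1) : Rˣ) : R) * ((T a n (u + 1) : Rˣ) : R) →
      ((Y a (n + 1) (u - 1) : Rˣ) : R) * ((Y a (n + 1) (u + 1) : Rˣ) : R) * F *
          ((1 : R) + (((Y a (n + 1 + 1) u)⁻¹ : Rˣ) : R)) =
        ∏ b ∈ Finset.univ.filter (fun b => C a b < 0),
          ((1 : R) + ((Y b (n + 1) u : Rˣ) : R)) := by
    intro F f3
    refine (Units.isUnit (T a n (u - 1) * T a (n + 1 + 1) (u - 1) *
      (T a n (u + 1) * T a (n + 1 + 1) (u + 1)) *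
      ((∏ b ∈ Finset.univ.filter (fun b => C a b < 0), T b n u) *
        ∏ b ∈ Finset.univ.filter (fun b => C a b < 0), T b (n + 1 + 1) u))).mul_right_cancel ?_
    simp only [Units.val_mul]
    linear_combination
      (((Y a (n + 1) (u + 1) : Rˣ) : R) * (((T a n (u + 1) : Rˣ) : R) *
          ((T a (n + 1 + 1) (u + 1) : Rˣ) : R)) * F *
        ((1 : R) + (((Y a (n + 1 + 1) u)⁻¹ : Rˣ) : R)) *
        ((∏ b ∈ Finset.univ.filter (fun b => C a b < 0), T b n u : Rˣ) : R) *
        ((∏ b ∈ Finset.univ.filter (fun b => C a b < 0), T b (n + 1 + 1) u : Rˣ) : R)) * f1 +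
      (((∏ b ∈ Finset.univ.filter (fun b => C a b < 0), T b (n + 1) (u - 1) : Rˣ) : R) * F *
        ((1 : R) + (((Y a (n + 1 + 1) u)⁻¹ : Rˣ) : R)) *
        ((∏ b ∈ Finset.univ.filter (fun b => C a b < 0), T b n u : Rˣ) : R) *
        ((∏ b ∈ Finset.univ.filter (fun b => C a b < 0), T b (n + 1 + 1) u : Rˣ) : R)) * f2 +
      (((∏ b ∈ Finset.univ.filter (fun b => C a b < 0), T b (n + 1) (u - 1) : Rˣ) : R) *
        ((∏ b ∈ Finset.univ.filter (fun b => C a b < 0), T b (n + 1) (u + 1) : Rˣ) : R) *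
        ((1 : R) + (((Y a (n + 1 + 1) u)⁻¹ : Rˣ) : R)) *
        ((∏ b ∈ Finset.univ.filter (fun b => C a b < 0), T b (n + 1 + 1) u : Rˣ) : R)) * f3 +
      (((∏ b ∈ Finset.univ.filter (fun b => C a b < 0), T b (n + 1) (u - 1) : Rˣ) : R) *
        ((∏ b ∈ Finset.univ.filter (fun b => C a b < 0), T b (n + 1) (u + 1) : Rˣ) : R) *
        (((T a n (u - 1) : Rˣ) : R) * ((T a n (u + 1) : Rˣ) : R))) * f4 +
      (-(((T a n (u - 1) : Rˣ) : R) * ((T a (n + 1 + 1) (u - 1) : Rˣ) : R) *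
        (((T a n (u + 1) : Rˣ) : R) * ((T a (n + 1 + 1) (u + 1) : Rˣ) : R)))) * f5
  rw [Units.val_mul]
  split_ifs with h0
  · refine main 1 ?_
    rw [h0]
    simp [hT0]
  · exact main _ (hGfact n (Nat.pos_of_ne_zero h0))
end

section
/- Let C be a simply laced generalized Cartan matrix, ℓ ≥ 2 an integer, R a commutative ring, and T^{(a)}_m(u) ∈ R^× (a ∈ I, 1 ≤ m ≤ ℓ−1, u ∈ ℤ) a family satisfying the level-ℓ restricted T-system: T^{(a)}_m(u−1)T^{(a)}_m(u+1) = T^{(a)}_{m−1}(u)T^{(a)}_{m+1}(u) + ∏_{b: C_{ab}<0} T^{(b)}_m(u), with boundary conventions T^{(a)}_0(u) = T^{(a)}_ℓ(u) = 1. Define Y^{(a)}_m(u) = ∏_{b: C_{ab}<0} T^{(b)}_m(u)/(T^{(a)}_{m−1}(u)T^{(a)}_{m+1}(u)) for 1 ≤ m ≤ ℓ−1, and assume each Y^{(a)}_m(u) and 1+Y^{(a)}_m(u) is invertible. Then Y satisfies the level-ℓ restricted Y-system: Y^{(a)}_m(u−1)Y^{(a)}_m(u+1) = ∏_{b: C_{ab}<0}(1+Y^{(b)}_m(u))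 / ((1+Y^{(a)}_{m−1}(u)^{−1})(1+Y^{(a)}_{m+1}(u)^{−1})), where the conventions Y^{(a)}_0(u)^{−1} = Y^{(a)}_ℓ(u)^{−1} = 0 mean the corresponding factors 1 + Y^{(a)}_0(u)^{−1} and 1 + Y^{(a)}_ℓ(u)^{−1} are replaced by 1. -/
private theorem aux_cancel2 {G : Type*} [CommGroup G] (p x y : G) :
    p * x⁻¹ * y⁻¹ * (x * y) = p :=
  Additive.ofMul.injective (by simp [ofMul_mul, ofMul_inv]; abel)

private theorem aux_inv2 {G : Type*} [CommGroup G] (p x y : G) :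
    (p * x⁻¹ * y⁻¹)⁻¹ * p = x * y :=
  Additive.ofMul.injective (by simp [ofMul_mul, ofMul_inv]; abel)

private theorem aux_cancel4 {G : Type*} [CommGroup G] (p q x y x' y' : G) :
    p * x⁻¹ * y⁻¹ * (q * x'⁻¹ * y'⁻¹) * (x * x') * (y * y') = p * q :=
  Additive.ofMul.injective (by simp [ofMul_mul, ofMul_inv]; abel)

/-- Theorem 5.3, simply laced case: if the family `T^{(a)}_m(u)` (for
`1 ≤ m ≤ ℓ−1`) of invertible elements satisfies the level-`ℓ` restricted T-system
associated with a simply laced generalized Cartan matrix `C`, with unit boundary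
conditions `T^{(a)}_0(u) = T^{(a)}_ℓ(u) = 1`, then
`Y^{(a)}_m(u) = ∏_{b∼a} T^{(b)}_m(u)/(T^{(a)}_{m−1}(u)T^{(a)}_{m+1}(u))`
satisfies the level-`ℓ` restricted Y-system (in multiplicative form, the boundary
factors `1 + Y^{(a)}_0(u)^{−1}` and `1 + Y^{(a)}_ℓ(u)^{−1}` being replaced by `1`). -/
theorem restricted_T_to_Y_simply_laced {I R : Type*} [Fintype I] [DecidableEq I]
    [CommRing R] (C : I → I → ℤ) (ℓ : ℕ) (hl : 2 ≤ ℓ)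
    (hdiag : ∀ a, C a a = 2)
    (hsl : ∀ a b, a ≠ b → C a b = 0 ∨ C a b = -1)
    (hzero : ∀ a b, C a b = 0 ↔ C b a = 0)
    (T : I → ℕ → ℤ → Rˣ)
    (hT0 : ∀ a u, T a 0 u = 1)
    (hTl : ∀ a u, T a ℓ u = 1)
    (hT : ∀ a (m : ℕ) (u : ℤ), 1 ≤ m → m ≤ ℓ - 1 →
      ((T a m (u - 1) * T a m (u + 1) : Rˣ) : R) =
        ((T a (m - 1) u * T a (m + 1) u : Rˣ) : R) +
          ((∏ b ∈ Finset.univ.filter (fun b => C a b < 0), T b m u : Rˣ) : R))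
    (Y : I → ℕ → ℤ → Rˣ)
    (hY : ∀ a (m : ℕ) (u : ℤ), 1 ≤ m → m ≤ ℓ - 1 →
      Y a m u = (∏ b ∈ Finset.univ.filter (fun b => C a b < 0), T b m u) *
        (T a (m - 1) u)⁻¹ * (T a (m + 1) u)⁻¹)
    (hinv : ∀ a (m : ℕ) (u : ℤ), 1 ≤ m → m ≤ ℓ - 1 →
      IsUnit ((1 : R) + ((Y a m u : Rˣ) : R))) :
    ∀ a (m : ℕ) (u : ℤ), 1 ≤ m → m ≤ ℓ - 1 →
      ((Y a m (u - 1) * Y a m (u + 1) : Rˣ) : R) *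
          (if m - 1 = 0 then 1 else (1 : R) + (((Y a (m - 1) u)⁻¹ : Rˣ) : R)) *
          (if m + 1 = ℓ then 1 else (1 : R) + (((Y a (m + 1) u)⁻¹ : Rˣ) : R)) =
        ∏ b ∈ Finset.univ.filter (fun b => C a b < 0),
          ((1 : R) + ((Y b m u : Rˣ) : R)) := by
  intro a m u hm1 hm2
  have hlpos : 0 < ℓ := lt_of_lt_of_le two_pos hl
  -- key identity: (1 + Y b k v) * (T b (k-1) v * T b (k+1) v) = T b k (v-1) * T b k (v+1)
  have key : ∀ b (k : ℕ) (v : ℤ), 1 ≤ k → k ≤ ℓ - 1 →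
      ((1 : R) + ((Y b k v : Rˣ) : R)) * ((T b (k - 1) v * T b (k + 1) v : Rˣ) : R)
        = ((T b k (v - 1) * T b k (v + 1) : Rˣ) : R) := by
    intro b k v h1 h2
    have hmul : ((Y b k v : Rˣ) : R) * ((T b (k - 1) v * T b (k + 1) v : Rˣ) : R)
        = ((∏ c ∈ Finset.univ.filter (fun c => C b c < 0), T c k v : Rˣ) : R) := by
      rw [← Units.val_mul]
      congr 1
      rw [hY b k v h1 h2]
      exact aux_cancel2 _ _ _
    rw [add_mul, one_mul, hmul, hT b k v h1 h2]
  -- the middle-range factor identity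
  have facmid : ∀ (k : ℕ) (v : ℤ), 1 ≤ k → k ≤ ℓ - 1 →
      ((1 : R) + (((Y a k v)⁻¹ : Rˣ) : R)) *
        ((∏ b ∈ Finset.univ.filter (fun b => C a b < 0), T b k v : Rˣ) : R)
        = ((T a k (v - 1) * T a k (v + 1) : Rˣ) : R) := by
    intro k v h1 h2
    have hmul : (((Y a k v)⁻¹ : Rˣ) : R) *
        ((∏ b ∈ Finset.univ.filter (fun b => C a b < 0), T b k v : Rˣ) : R)
        = ((T a (k - 1) v * T a (k + 1) v : Rˣ) : R) := by
      rw [← Units.val_mul]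
      congr 1
      rw [hY a k v h1 h2]
      exact aux_inv2 _ _ _
    rw [add_mul, one_mul, hmul, hT a k v h1 h2, add_comm]
  have fac1 : ∀ (k : ℕ) (v : ℤ), k < ℓ →
      (if k = 0 then (1 : R) else (1 : R) + (((Y a k v)⁻¹ : Rˣ) : R)) *
        ((∏ b ∈ Finset.univ.filter (fun b => C a b < 0), T b k v : Rˣ) : R)
        = ((T a k (v - 1) * T a k (v + 1) : Rˣ) : R) := by
    intro k v hk
    by_cases h0 : k = 0
    · subst h0
      simp [hT0]
    · rw [if_neg h0]
      exact facmid k v (Nat.one_le_iff_ne_zero.mpr h0) (Nat.le_sub_one_of_lt hk)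
  have fac2 : ∀ (k : ℕ) (v : ℤ), 1 ≤ k → k ≤ ℓ →
      (if k = ℓ then (1 : R) else (1 : R) + (((Y a k v)⁻¹ : Rˣ) : R)) *
        ((∏ b ∈ Finset.univ.filter (fun b => C a b < 0), T b k v : Rˣ) : R)
        = ((T a k (v - 1) * T a k (v + 1) : Rˣ) : R) := by
    intro k v h1 hk
    by_cases hL : k = ℓ
    · subst hL
      simp [hTl]
    · rw [if_neg hL]
      exact facmid k v h1 (Nat.le_sub_one_of_lt (lt_of_le_of_ne hk hL))
  set P1 : Rˣ := ∏ b ∈ Finset.univ.filter (fun b => C a b < 0), T b (m - 1) u with hP1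
  set P2 : Rˣ := ∏ b ∈ Finset.univ.filter (fun b => C a b < 0), T b (m + 1) u with hP2
  apply (Units.isUnit (P1 * P2)).mul_right_cancel
  have coeprod : ∀ (k : ℕ) (v : ℤ),
      ((∏ b ∈ Finset.univ.filter (fun b => C a b < 0), T b k v : Rˣ) : R)
        = ∏ b ∈ Finset.univ.filter (fun b => C a b < 0), ((T b k v : Rˣ) : R) :=
    fun k v => map_prod (Units.coeHom R) _ _
  have hmlt : m - 1 < ℓ := lt_of_le_of_lt (Nat.sub_le m 1) (lt_of_le_of_lt hm2 (Nat.sub_lt hlpos one_pos))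
  have hmle : m + 1 ≤ ℓ := by omega
  calc ((Y a m (u - 1) * Y a m (u + 1) : Rˣ) : R) *
          (if m - 1 = 0 then 1 else (1 : R) + (((Y a (m - 1) u)⁻¹ : Rˣ) : R)) *
          (if m + 1 = ℓ then 1 else (1 : R) + (((Y a (m + 1) u)⁻¹ : Rˣ) : R)) *
        ((P1 * P2 : Rˣ) : R)
      = ((Y a m (u - 1) * Y a m (u + 1) : Rˣ) : R) *
          ((if m - 1 = 0 then 1 else (1 : R) + (((Y a (m - 1) u)⁻¹ : Rˣ) : R)) * (P1 : R)) *
          ((if m + 1 = ℓ then 1 else (1 : R) + (((Y a (m + 1) u)⁻¹ : Rˣ) : R)) * (P2 : R)) := by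
        simp only [Units.val_mul]; ring
    _ = ((Y a m (u - 1) * Y a m (u + 1) : Rˣ) : R) *
          ((T a (m - 1) (u - 1) * T a (m - 1) (u + 1) : Rˣ) : R) *
          ((T a (m + 1) (u - 1) * T a (m + 1) (u + 1) : Rˣ) : R) := by
        rw [hP1, hP2, fac1 (m - 1) u hmlt, fac2 (m + 1) u (le_trans hm1 (Nat.le_succ m)) hmle]
    _ = (((∏ b ∈ Finset.univ.filter (fun b => C a b < 0), T b m (u - 1)) *
          (∏ b ∈ Finset.univ.filter (fun b => C a b < 0), T b m (u + 1)) : Rˣ) : R) := by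
        rw [← Units.val_mul, ← Units.val_mul]
        congr 1
        rw [hY a m (u - 1) hm1 hm2, hY a m (u + 1) hm1 hm2]
        exact aux_cancel4 _ _ _ _ _ _
    _ = (∏ b ∈ Finset.univ.filter (fun b => C a b < 0), ((1 : R) + ((Y b m u : Rˣ) : R))) *
        ((P1 * P2 : Rˣ) : R) := by
        rw [Units.val_mul, Units.val_mul, coeprod, coeprod, hP1, hP2, coeprod, coeprod,
          ← Finset.prod_mul_distrib, ← Finset.prod_mul_distrib, ← Finset.prod_mul_distrib]
        refine Finset.prod_congr rfl (fun b _ => ?_)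
        have h := key b m u hm1 hm2
        simp only [Units.val_mul] at h
        rw [← h]
end
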